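/- arXiv:1304.7957 — 8 statements merged into one kernel-verified Lean document; each statement's English description precedes it below -/
import Mathlib

section
/- Let G be a finite abelian group and let S be a sequence of elements of G of length |G| + D(G) - 1, where D(G) is the Davenport constant of G. Then S contains a subsequence of length exactly |G| whose sum is zero in G. -/
open Finset

/-- `D` is the Davenport constant of `G`: the least `d > 0` such that every
sequence (multiset) of `d` elements of `G` has a nonempty zero-sum subsequence. -/
def IsDavenport (G : Type*) [AddCommGroup G] (D : ℕ) : Prop :=
  IsLeast {d : ℕ | 0 < d ∧ ∀ S : Multiset G, Multiset.card S = d →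
    ∃ T, T ≤ S ∧ T ≠ 0 ∧ T.sum = 0} D

/-- `s` is the generalized EGZ invariant `s_m(G)`: the least `d > 0` such that every
sequence of `d` elements of `G` has a zero-sum subsequence of length exactly `m`. -/
def IsEGZConst (G : Type*) [AddCommGroup G] (m s : ℕ) : Prop :=
  IsLeast {d : ℕ | 0 < d ∧ ∀ S : Multiset G, Multiset.card S = d →
    ∃ T, T ≤ S ∧ Multiset.card T = m ∧ T.sum = 0} s

/-- The coloring `c` admits a zero-sum hyperstar: `m` distinct `r`-sets with a common
vertex whose colors sum to zero. -/
def HasZeroSumStar (G : Type*) [AddCommGroup G] (r m d : ℕ)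
    (c : Finset (Fin d) → G) : Prop :=
  ∃ v : Fin d, ∃ F : Finset (Finset (Fin d)), F.card = m ∧
    (∀ e ∈ F, e.card = r ∧ v ∈ e) ∧ ∑ e ∈ F, c e = 0

/-- The coloring `c` admits a zero-sum intersecting family: `m` distinct `r`-sets with
pairwise nonempty intersections whose colors sum to zero. -/
def HasZeroSumIntersecting (G : Type*) [AddCommGroup G] (r m d : ℕ)
    (c : Finset (Fin d) → G) : Prop :=
  ∃ F : Finset (Finset (Fin d)), F.card = m ∧ (∀ e ∈ F, e.card = r) ∧
    (∀ e ∈ F, ∀ f ∈ F, (e ∩ f).Nonempty) ∧ ∑ e ∈ F, c e = 0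

/-- The coloring `c` admits a zero-sum delta-system of type `S(r,q,m)`: `m` distinct
`r`-sets whose pairwise intersections all equal a fixed `q`-set `Q`, with zero color sum. -/
def HasZeroSumDelta (G : Type*) [AddCommGroup G] (r q m d : ℕ)
    (c : Finset (Fin d) → G) : Prop :=
  ∃ Q : Finset (Fin d), Q.card = q ∧ ∃ F : Finset (Finset (Fin d)), F.card = m ∧
    (∀ e ∈ F, e.card = r) ∧ (∀ e ∈ F, ∀ f ∈ F, e ≠ f → e ∩ f = Q) ∧
    ∑ e ∈ F, c e = 0

/-- `R` is the zero-sum Ramsey number `R(S_m^{(r)}, G)` for hyperstars. -/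
def IsStarRamsey (G : Type*) [AddCommGroup G] (r m R : ℕ) : Prop :=
  IsLeast {d : ℕ | 0 < d ∧ ∀ c : Finset (Fin d) → G, HasZeroSumStar G r m d c} R

/-- `R` is the zero-sum Ramsey number `R(I_m^{(r)}, G)` for intersecting families. -/
def IsIntRamsey (G : Type*) [AddCommGroup G] (r m R : ℕ) : Prop :=
  IsLeast {d : ℕ | 0 < d ∧ ∀ c : Finset (Fin d) → G, HasZeroSumIntersecting G r m d c} R

/-- `R` is the zero-sum Ramsey number `R(S(r,q,m), G)` for delta-systems. -/
def IsDeltaRamsey (G : Type*) [AddCommGroup G] (r q m R : ℕ) : Prop :=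
  IsLeast {d : ℕ | 0 < d ∧ ∀ c : Finset (Fin d) → G, HasZeroSumDelta G r q m d c} R

/-!
Translate `S` so that `0` is a term of maximal multiplicity `h`, and let `T₀` be `S` with its
zeros removed, so `|T₀| = |G| + D - 1 - h`. It suffices to find a zero-sum `V ≤ T₀` with
`|G| - h ≤ |V| ≤ |G|` and pad it with zeros. While at least `|G|` terms remain, Gao's lemma
(Scherk's theorem applied to the sumsets of the layers `{v | i < count v}`) removes a nonempty
zero-sum block of length at most `h`; once fewer than `|G|` remain, the Davenport property removes
zero-sum blocks until fewer than `D` terms are left. Take all blocks of the second kind (fewer than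
`|G|` terms in total), then blocks of the first kind until the length reaches `|G| - h`; each of
these adds at most `h` terms, so the length stays at most `|G|`.
-/

section ZeroSum

open scoped Pointwise

variable {G : Type*} [AddCommGroup G] [DecidableEq G]

lemma Finset.neg_mem_of_forall_add_mem {A : Finset G} {b : G} (h0 : 0 ∈ A)
    (hb : ∀ a ∈ A, a + b ∈ A) : -b ∈ A := by
  have himage : A.image (· + b) = A :=
    eq_of_subset_of_card_le (image_subset_iff.2 hb)
      (card_image_of_injective _ (add_left_injective b)).ge
  rw [← himage] at h0
  simpa using h0

theorem Finset.scherk (A B : Finset G) (h0A : 0 ∈ A) (h0B : 0 ∈ B)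
    (huniq : ∀ a ∈ A, ∀ b ∈ B, a + b = 0 → a = 0) :
    #A + #B ≤ #(A + B) + 1 := by
  induction hB : #B using Nat.strong_induction_on generalizing A B with
  | _ m ih =>
  subst hB
  by_cases hclosed : ∀ e ∈ A, ∀ b ∈ B, b + e ∈ A
  · have hB0 : B ⊆ {0} := fun b hb => by
      have hnb := neg_mem_of_forall_add_mem h0A fun a ha => by
        rw [add_comm]; exact hclosed a ha b hb
      simpa using huniq _ hnb b hb (neg_add_cancel b)
    simp [Subset.antisymm hB0 (singleton_subset_iff.2 h0B)]
  · push Not at hclosed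
    obtain ⟨e, he, b₀, hb₀, hb₀e⟩ := hclosed
    -- Dyson's `e`-transform `(A ∪ (B + e), B ∩ (A - e))`
    set A' := A ∪ B.image (· + e)
    set B' := B.filter (· + e ∈ A)
    have hsub : A' + B' ⊆ A + B := by
      intro x hx
      obtain ⟨a, ha, b, hb, rfl⟩ := mem_add.1 hx
      rw [mem_filter] at hb
      rcases mem_union.1 ha with ha | ha
      · exact add_mem_add ha hb.1
      · obtain ⟨c, hc, rfl⟩ := mem_image.1 ha
        exact mem_add.2 ⟨b + e, hb.2, c, hc, by abel⟩
    have hcard : #A + #B ≤ #A' + #B' := by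
      have h1 : #A' + #(A ∩ B.image (· + e)) = #A + #B := by
        rw [card_union_add_card_inter, card_image_of_injective _ (add_left_injective e)]
      have h2 : A ∩ B.image (· + e) ⊆ B'.image (· + e) := by
        intro x hx
        obtain ⟨hxA, hxB⟩ := mem_inter.1 hx
        obtain ⟨b, hb, rfl⟩ := mem_image.1 hxB
        exact mem_image.2 ⟨b, mem_filter.2 ⟨hb, hxA⟩, rfl⟩
      have h3 := card_le_card h2
      rw [card_image_of_injective _ (add_left_injective e)] at h3
      omega
    have hlt : #B' < #B := card_lt_card <| filter_ssubset.2 ⟨b₀, hb₀, hb₀e⟩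
    have huniq' : ∀ a ∈ A', ∀ b ∈ B', a + b = 0 → a = 0 := by
      intro a ha b hb hab
      rw [mem_filter] at hb
      rcases mem_union.1 ha with ha | ha
      · exact huniq a ha b hb.1 hab
      · obtain ⟨c, hc, rfl⟩ := mem_image.1 ha
        have hbe : b + e = 0 := huniq _ hb.2 c hc (by rw [← hab]; abel)
        have he0 : e = 0 := huniq e he b hb.1 (by rw [add_comm, hbe])
        subst he0
        simp_all
    have := ih _ hlt A' B' (mem_union_left _ h0A) (mem_filter.2 ⟨h0B, by simpa⟩) huniq' rfl
    have := card_le_card hsub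
    omega

lemma Multiset.cons_le_of_card_lt_count {α : Type*} [DecidableEq α] {U R : Multiset α} {a : α}
    (hU : U ≤ R) (ha : U.card < R.count a) : a ::ₘ U ≤ R := by
  rw [le_iff_count]
  intro v
  by_cases hv : v = a
  · subst hv
    rw [count_cons_self]
    have := count_le_card v U
    omega
  · rw [count_cons_of_ne hv]
    exact le_iff_count.1 hU v

lemma Multiset.sum_card_filter_lt_count {α : Type*} [DecidableEq α] {R : Multiset α} {k : ℕ}
    (hk : ∀ v, R.count v ≤ k) :
    ∑ i ∈ Finset.range k, #{v ∈ R.toFinset | i < R.count v} = R.card := by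
  calc ∑ i ∈ Finset.range k, #{v ∈ R.toFinset | i < R.count v}
      = ∑ v ∈ R.toFinset, #{i ∈ Finset.range k | i < R.count v} := by
        simp only [card_filter]
        exact sum_comm
    _ = ∑ v ∈ R.toFinset, R.count v := by
        refine sum_congr rfl fun v _ => ?_
        rw [show {i ∈ Finset.range k | i < R.count v} = Finset.range (R.count v) by
          ext i; simp only [Finset.mem_filter, Finset.mem_range]; have := hk v; omega,
          Finset.card_range]
    _ = R.card := toFinset_sum_count_eq R

def Multiset.sumsOfCardLE (R : Multiset G) (j : ℕ) : Finset G :=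
  ((R.powerset.filter (·.card ≤ j)).map sum).toFinset

lemma Multiset.mem_sumsOfCardLE {R : Multiset G} {j : ℕ} {s : G} :
    s ∈ R.sumsOfCardLE j ↔ ∃ U ≤ R, U.card ≤ j ∧ U.sum = s := by
  simp [sumsOfCardLE, and_assoc]

lemma Multiset.zero_mem_sumsOfCardLE (R : Multiset G) (j : ℕ) : 0 ∈ R.sumsOfCardLE j :=
  mem_sumsOfCardLE.2 ⟨0, zero_le R, by simp, sum_zero⟩

section ShortZeroSumFree

variable {R : Multiset G} {k : ℕ} (hshort : ∀ W ≤ R, W ≠ 0 → W.sum = 0 → k < W.card)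
include hshort

lemma Multiset.card_sumsOfCardLE_add_card_le {j : ℕ} (hj : j < k) :
    #(R.sumsOfCardLE j) + #{v ∈ R.toFinset | j < R.count v} ≤ #(R.sumsOfCardLE (j + 1)) := by
  set L := {v ∈ R.toFinset | j < R.count v}
  have hL {a : G} (ha : a ∈ L) {U : Multiset G} (hUR : U ≤ R) (hU : U.card ≤ j) : a ::ₘ U ≤ R :=
    cons_le_of_card_lt_count hUR (by simp only [L, Finset.mem_filter] at ha; omega)
  have hzero : 0 ∉ L := fun h0 => by
    have := hshort {0} (hL h0 (zero_le R) (by simp)) (by simp) (by simp)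
    simp only [card_singleton] at this
    omega
  have hsub : R.sumsOfCardLE j + insert 0 L ⊆ R.sumsOfCardLE (j + 1) := by
    intro x hx
    obtain ⟨s, hs, a, ha, rfl⟩ := Finset.mem_add.1 hx
    obtain ⟨U, hUR, hUcard, rfl⟩ := mem_sumsOfCardLE.1 hs
    rcases Finset.mem_insert.1 ha with rfl | ha
    · exact mem_sumsOfCardLE.2 ⟨U, hUR, by omega, by simp⟩
    · exact mem_sumsOfCardLE.2 ⟨a ::ₘ U, hL ha hUR hUcard, by simp [hUcard], by simp [add_comm]⟩
  have huniq : ∀ s ∈ R.sumsOfCardLE j, ∀ a ∈ insert 0 L, s + a = 0 → s = 0 := by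
    intro s hs a ha hsa
    obtain ⟨U, hUR, hUcard, rfl⟩ := mem_sumsOfCardLE.1 hs
    rcases Finset.mem_insert.1 ha with rfl | ha
    · simpa using hsa
    · have := hshort (a ::ₘ U) (hL ha hUR hUcard) cons_ne_zero (by simpa [add_comm] using hsa)
      simp only [card_cons] at this
      omega
  have := scherk _ _ (zero_mem_sumsOfCardLE R j) (Finset.mem_insert_self 0 L) huniq
  rw [card_insert_of_notMem hzero] at this
  have := Finset.card_le_card hsub
  omega

lemma Multiset.card_lt_card_sumsOfCardLE (hk : ∀ v, R.count v ≤ k) :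
    R.card < #(R.sumsOfCardLE k) := by
  suffices ∀ j ≤ k, 1 + ∑ i ∈ Finset.range j, #{v ∈ R.toFinset | i < R.count v} ≤
      #(R.sumsOfCardLE j) by
    have := this k le_rfl
    rw [sum_card_filter_lt_count hk] at this
    omega
  intro j hj
  induction j with
  | zero => simpa using Finset.card_pos.2 ⟨0, zero_mem_sumsOfCardLE R 0⟩
  | succ j ih =>
    have := card_sumsOfCardLE_add_card_le hshort (j := j) (by omega)
    rw [sum_range_succ]
    have := ih (by omega)
    omega

end ShortZeroSumFree

theorem exists_zero_sum_card_le_of_count_le [Fintype G] (R : Multiset G) (k : ℕ)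
    (hk : ∀ v, R.count v ≤ k) (hR : Fintype.card G ≤ R.card) :
    ∃ W ≤ R, W ≠ 0 ∧ W.sum = 0 ∧ W.card ≤ k := by
  by_contra! hshort
  have := R.card_lt_card_sumsOfCardLE hshort hk
  have := card_le_univ (R.sumsOfCardLE k)
  omega

lemma Multiset.exists_le_card_eq {α : Type*} {s : Multiset α} {n : ℕ} (h : n ≤ card s) :
    ∃ t ≤ s, card t = n := by
  obtain ⟨t, ht⟩ := card_pos_iff_exists_mem.1 <| by
    rw [card_powersetCard]; exact Nat.choose_pos h
  exact ⟨t, mem_powersetCard.1 ht⟩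

section Davenport

variable {D : ℕ}
  (hD : ∀ S : Multiset G, S.card = D → ∃ T ≤ S, T ≠ 0 ∧ T.sum = 0)
include hD

theorem exists_zero_sum_card_lt_add (R : Multiset G) :
    ∃ B ≤ R, B.sum = 0 ∧ R.card < B.card + D := by
  induction hR : R.card using Nat.strong_induction_on generalizing R with
  | _ m ih =>
  subst hR
  by_cases hsmall : R.card < D
  · exact ⟨0, Multiset.zero_le R, Multiset.sum_zero, by simpa⟩
  obtain ⟨U, hUR, hU⟩ := Multiset.exists_le_card_eq (not_lt.1 hsmall)
  obtain ⟨W, hWU, hW0, hWsum⟩ := hD U hU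
  have hWR := hWU.trans hUR
  have hcard := congrArg Multiset.card (Multiset.sub_add_cancel hWR)
  have hWpos := Multiset.card_pos.2 hW0
  rw [Multiset.card_add] at hcard
  obtain ⟨B, hB, hBsum, hBcard⟩ := ih _ (by omega) (R - W) rfl
  exact ⟨B + W, (le_tsub_iff_right hWR).1 hB, by simp [hBsum, hWsum], by
    rw [Multiset.card_add]; omega⟩

theorem exists_zero_sum_card_le_card_add [Fintype G] (h : ℕ) (T : Multiset G)
    (hT : ∀ v, T.count v ≤ h) :
    ∃ V ≤ T, V.sum = 0 ∧ V.card ≤ Fintype.card G ∧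
      (Fintype.card G ≤ V.card + h ∨ T.card < V.card + D) := by
  induction hTc : T.card using Nat.strong_induction_on generalizing T with
  | _ m ih =>
  subst hTc
  by_cases hsmall : T.card < Fintype.card G
  · obtain ⟨B, hBT, hBsum, hBcard⟩ := exists_zero_sum_card_lt_add hD T
    exact ⟨B, hBT, hBsum, (Multiset.card_le_card hBT).trans hsmall.le, Or.inr hBcard⟩
  obtain ⟨W, hWT, hW0, hWsum, hWh⟩ :=
    exists_zero_sum_card_le_of_count_le T h hT (not_lt.1 hsmall)
  have hcard := congrArg Multiset.card (Multiset.sub_add_cancel hWT)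
  have hWpos := Multiset.card_pos.2 hW0
  rw [Multiset.card_add] at hcard
  obtain ⟨V, hV, hVsum, hVn, hVcard⟩ := ih _ (by omega) (T - W)
    (fun v => (Multiset.count_le_of_le v tsub_le_self).trans (hT v)) rfl
  by_cases hlong : Fintype.card G ≤ V.card + h
  · exact ⟨V, hV.trans tsub_le_self, hVsum, hVn, Or.inl hlong⟩
  · refine ⟨V + W, (le_tsub_iff_right hWT).1 hV, by simp [hVsum, hWsum], ?_, Or.inr ?_⟩ <;>
    · rw [Multiset.card_add]; omega

theorem exists_zero_sum_card_eq_of_count_le_count_zero [Fintype G] (S : Multiset G)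
    (hS : S.card = Fintype.card G + D - 1) (hmax : ∀ v, S.count v ≤ S.count 0) :
    ∃ T ≤ S, T.card = Fintype.card G ∧ T.sum = 0 := by
  set n := Fintype.card G
  set T₀ := S.filter (· ≠ 0)
  have hsplit : T₀ + Multiset.replicate (S.count 0) 0 = S := by
    rw [← Multiset.filter_eq', add_comm]
    exact Multiset.filter_add_not _ S
  have hcard := congrArg Multiset.card hsplit
  rw [Multiset.card_add, Multiset.card_replicate] at hcard
  obtain ⟨V, hVT, hVsum, hVn, hVcard⟩ := exists_zero_sum_card_le_card_add hD (S.count 0) T₀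
    fun v => (Multiset.count_le_of_le v (Multiset.filter_le _ S)).trans (hmax v)
  have hn : 0 < n := Fintype.card_pos
  have hpad : n - V.card ≤ S.count 0 := by omega
  refine ⟨V + Multiset.replicate (n - V.card) 0, ?_, ?_, ?_⟩
  · rw [← hsplit]
    exact add_le_add hVT ((Multiset.replicate_le_replicate 0).2 hpad)
  · rw [Multiset.card_add, Multiset.card_replicate]
    omega
  · simp [hVsum]

end Davenport

end ZeroSum

/-- Gao's theorem: a sequence of length `|G| + D(G) - 1` contains a zero-sum
subsequence of length exactly `|G|`. -/
theorem stmt_1 (G : Type*) [AddCommGroup G] [Fintype G] (D : ℕ)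
    (hD : IsDavenport G D) (S : Multiset G)
    (hS : Multiset.card S = Fintype.card G + D - 1) :
    ∃ T, T ≤ S ∧ Multiset.card T = Fintype.card G ∧ T.sum = 0 := by
  classical
  obtain ⟨g, -, hg⟩ := exists_max_image univ (S.count ·) univ_nonempty
  have hcount (v : G) : (S.map (· - g)).count v = S.count (v + g) := by
    simpa using Multiset.count_map_eq_count' _ S (sub_left_injective (b := g)) (v + g)
  obtain ⟨T, hT, hTcard, hTsum⟩ := exists_zero_sum_card_eq_of_count_le_count_zero hD.1.2
    (S.map (· - g)) (by rwa [Multiset.card_map]) fun v => by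
      simpa [hcount] using hg (v + g) (mem_univ _)
  refine ⟨T.map (· + g), ?_, by rwa [Multiset.card_map], ?_⟩
  · simpa [Multiset.map_map, Function.comp_def] using Multiset.map_le_map (f := (· + g)) hT
  · rw [Multiset.sum_map_add, Multiset.map_id', hTsum, Multiset.map_const', Multiset.sum_replicate,
      hTcard, card_nsmul_eq_zero, zero_add]
end

section
/- Let G be a finite abelian group, let r ≥ 2, and let m be a positive multiple of exp(G). Let n be the least positive integer such that C(n-1, r-1) ≥ s_m(G). Then for every coloring c of the r-element subsets of an n-element vertex set V by elements of G, there exists a vertex v ∈ V and a family of m distinct r-subsets of V, all containing v, whose color sum is zero in G. -/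
/-!
Fix a vertex `v`. The star at `v` consists of the `C(n - 1, r - 1)` sets `insert v a` with `a`
an `(r - 1)`-subset of the other vertices, and by the choice of `n` this is at least `s_m(G)`.
Any `s_m(G)` of these edges carry colors containing a zero-sum subsequence of length `m`, and
the corresponding `m` edges form the required zero-sum hyperstar.
-/

open Finset

theorem Multiset.exists_le_map_eq_of_le_map {α β : Type*} {f : α → β} {s : Multiset α}
    {t : Multiset β} (h : t ≤ s.map f) : ∃ u ≤ s, u.map f = t := by
  induction s using Quotient.inductionOn with | h l => ?_
  induction t using Quotient.inductionOn with | h k => ?_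
  obtain ⟨k', hperm, hsub⟩ := h
  obtain ⟨l', hl', rfl⟩ := List.sublist_map_iff.mp hsub
  exact ⟨l', hl'.subperm, Quot.sound hperm⟩

theorem IsEGZConst.exists_subset_card_eq_sum_eq_zero {G ι : Type*} [AddCommGroup G]
    {m s : ℕ} (hs : IsEGZConst G m s) (f : ι → G) {F : Finset ι} (hF : s ≤ #F) :
    ∃ F' ⊆ F, #F' = m ∧ ∑ i ∈ F', f i = 0 := by
  obtain ⟨E, hEF, hEcard⟩ := exists_subset_card_eq hF
  obtain ⟨T, hTle, hTcard, hTsum⟩ := hs.1.2 (E.val.map f)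
    (by rw [Multiset.card_map, card_val, hEcard])
  obtain ⟨u, huE, rfl⟩ := Multiset.exists_le_map_eq_of_le_map hTle
  have hu : u.Nodup := Multiset.nodup_of_le huE E.nodup
  refine ⟨⟨u, hu⟩, fun i hi => hEF (Multiset.mem_of_le huE hi), ?_, hTsum⟩
  rw [← hTcard, Multiset.card_map]
  rfl

section Hyperstar

variable {α : Type*} [Fintype α] [DecidableEq α]

def hyperstar (v : α) (r : ℕ) : Finset (Finset α) :=
  (powersetCard (r - 1) (univ.erase v)).image (insert v)

theorem notMem_of_mem_powersetCard_erase {v : α} {k : ℕ} {a : Finset α}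
    (ha : a ∈ powersetCard k (univ.erase v)) : v ∉ a :=
  (subset_erase.mp (mem_powersetCard.mp ha).1).2

theorem card_hyperstar (v : α) (r : ℕ) :
    #(hyperstar v r) = (Fintype.card α - 1).choose (r - 1) := by
  have hinj : Set.InjOn (insert v) (powersetCard (r - 1) (univ.erase v) : Set (Finset α)) := by
    intro a ha b hb hab
    rw [← erase_insert (notMem_of_mem_powersetCard_erase ha),
      ← erase_insert (notMem_of_mem_powersetCard_erase hb), hab]
  rw [hyperstar, card_image_of_injOn hinj, card_powersetCard, card_erase_of_mem (mem_univ v),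
    card_univ]

theorem card_eq_and_mem_of_mem_hyperstar {v : α} {r : ℕ} (hr : 1 ≤ r) {e : Finset α}
    (he : e ∈ hyperstar v r) : #e = r ∧ v ∈ e := by
  obtain ⟨a, ha, rfl⟩ := mem_image.mp he
  rw [card_insert_of_notMem (notMem_of_mem_powersetCard_erase ha),
    (mem_powersetCard.mp ha).2]
  exact ⟨by omega, mem_insert_self v a⟩

end Hyperstar

theorem stmt_8_general (G : Type*) [AddCommGroup G] (r m s n : ℕ)
    (hr : 2 ≤ r)
    (hs : IsEGZConst G m s)
    (hn : IsLeast {n : ℕ | 0 < n ∧ s ≤ (n - 1).choose (r - 1)} n)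
    (c : Finset (Fin n) → G) :
    HasZeroSumStar G r m n c := by
  obtain ⟨⟨hn0, hns⟩, -⟩ := hn
  let v : Fin n := ⟨0, hn0⟩
  obtain ⟨F, hF, hFcard, hFsum⟩ := hs.exists_subset_card_eq_sum_eq_zero c
    (F := hyperstar v r) (by rwa [card_hyperstar, Fintype.card_fin])
  exact ⟨v, F, hFcard, fun e he => card_eq_and_mem_of_mem_hyperstar (by omega) (hF he), hFsum⟩

/-- Upper bound `R(S_m^{(r)}, G) ≤ Ω(s_m(G))`: every `G`-coloring of the `r`-subsets of
an `n`-element set yields a zero-sum hyperstar with `m` edges. -/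
theorem stmt_8 (G : Type*) [AddCommGroup G] [Fintype G] (r m s n : ℕ)
    (hr : 2 ≤ r) (hm : 0 < m) (hexp : AddMonoid.exponent G ∣ m)
    (hs : IsEGZConst G m s)
    (hn : IsLeast {n : ℕ | 0 < n ∧ s ≤ (n - 1).choose (r - 1)} n)
    (c : Finset (Fin n) → G) :
    HasZeroSumStar G r m n c :=
  stmt_8_general G r m s n hr hs hn c
end

section
/- Let G be a finite abelian group, let r ≥ 2, and let m be a positive multiple of exp(G). Let n be the least positive integer such that C(n-1, r-1) ≥ s_m(G). Then there exists a coloring c of the r-element subsets of an (n-2)-element vertex set by elements of G such that no family of m distinct r-subsets with pairwise nonempty intersections has color sum zero in G. In other words, R(I_m^{(r)}, G) ≥ n - 1. -/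
/-!
Take `s_m(G) - 1` elements of `G` with no zero-sum subsequence of length `m`. Since
`C(n - 2, r) ≤ C(n - 2, r - 1) ⌊(n - 2) / r⌋` and `C(n - 2, r - 1) < s_m(G)` by the minimality
of `n`, the `r`-subsets of an `(n - 2)`-set split into at most `s_m(G) - 1` matchings; colour
each matching by its own term of the sequence. An intersecting family meets each matching at most
once, so the colours of `m` of its members form a subsequence of length `m`, which is not zero-sum.

The splitting into matchings is the weak form of Baranyai's theorem (`C(d, r) ≤ N ⌊d / r⌋`
suffices for `N` matchings), proved as Baranyai did: the vertices are added one at a time while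
each future matching is recorded by the multiset of its traces on the vertices added so far, and
the traces to be extended by the next vertex are found by rounding a fractional choice to an
integral one with Hall's theorem.
-/

open Finset

theorem Multiset.sum_map_eq_sum_count_mul {β : Type*} [Fintype β] [DecidableEq β]
    (s : Multiset β) (f : β → ℕ) : (s.map f).sum = ∑ b, s.count b * f b := by
  rw [sum_multiset_map_count]
  refine sum_subset (subset_univ _) fun b _ hb => ?_
  rw [Multiset.count_eq_zero.2 (by simpa using hb), zero_smul]

theorem Fintype.exists_forall_le_sum_eq_of_le_card_mul {ι : Type*} [Fintype ι] {q T : ℕ}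
    (h : T ≤ Fintype.card ι * q) : ∃ a : ι → ℕ, (∀ i, a i ≤ q) ∧ ∑ i, a i = T := by
  classical
  induction T with
  | zero => exact ⟨0, fun _ => Nat.zero_le q, by simp⟩
  | succ T ih =>
    obtain ⟨a, haq, hsum⟩ := ih (by omega)
    obtain ⟨i, hi⟩ : ∃ i, a i < q := by
      by_contra! hq
      have := sum_le_sum fun i (_ : i ∈ univ) => hq i
      simp only [sum_const, card_univ, smul_eq_mul] at this
      omega
    refine ⟨a + Pi.single i 1, fun j => ?_, by simp [sum_add_distrib, hsum]⟩
    rcases eq_or_ne j i with rfl | hj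
    · simpa using hi
    · simpa [hj] using haq j

theorem Nat.choose_le_choose_sub_one_mul_div (d : ℕ) {r : ℕ} (hr : 0 < r) :
    d.choose r ≤ d.choose (r - 1) * (d / r) := by
  have hd : d - (r - 1) ≤ d / r * r := by
    have := Nat.div_add_mod d r
    have := Nat.mod_lt d hr
    rw [mul_comm]
    omega
  refine Nat.le_of_mul_le_mul_right ?_ hr
  calc d.choose r * r = d.choose (r - 1) * (d - (r - 1)) := by
        rw [← Nat.choose_succ_right_eq, Nat.sub_add_cancel hr]
    _ ≤ d.choose (r - 1) * (d / r) * r := by rw [mul_assoc]; gcongr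

section Assignment

variable {ι β : Type*} [Fintype ι] [Fintype β] {D : ℕ} {a : ι → β → ℕ} {t : β → ℕ}

theorem sum_le_card_of_sum_eq_mul (hD : 0 < D) (hrow : ∀ i, ∑ b, a i b ≤ D)
    (hcol : ∀ b, ∑ i, a i b = D * t b) : ∑ b, t b ≤ Fintype.card ι := by
  refine Nat.le_of_mul_le_mul_left ?_ hD
  calc D * ∑ b, t b = ∑ b, ∑ i, a i b := by simp_rw [mul_sum, hcol]
    _ = ∑ i, ∑ b, a i b := sum_comm
    _ ≤ ∑ _i : ι, D := sum_le_sum fun i _ => hrow i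
    _ = D * Fintype.card ι := by simp [mul_comm]

theorem sum_sub_sum_eq_mul (hrow : ∀ i, ∑ b, a i b ≤ D) (hcol : ∀ b, ∑ i, a i b = D * t b) :
    ∑ i, (D - ∑ b, a i b) = D * (Fintype.card ι - ∑ b, t b) := by
  have := sum_congr rfl fun i (_ : i ∈ univ) => Nat.sub_add_cancel (hrow i)
  rw [sum_add_distrib, sum_comm, sum_congr rfl fun b _ => hcol b, ← mul_sum] at this
  simp only [sum_const, card_univ, smul_eq_mul] at this
  rw [Nat.mul_sub, mul_comm D]
  omega

theorem card_le_sum_add_slack (hD : 0 < D) (hrow : ∀ i, ∑ b, a i b ≤ D)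
    (hcol : ∀ b, ∑ i, a i b = D * t b) (W : Finset ι) :
    #W ≤ ∑ b ∈ {b | ∃ i ∈ W, 0 < a i b}, t b +
      if ∃ i ∈ W, ∑ b, a i b < D then Fintype.card ι - ∑ b, t b else 0 := by
  set B : Finset β := {b | ∃ i ∈ W, 0 < a i b}
  have hrowW : ∑ i ∈ W, ∑ b, a i b ≤ D * ∑ b ∈ B, t b :=
    calc ∑ i ∈ W, ∑ b, a i b = ∑ i ∈ W, ∑ b ∈ B, a i b := by
          refine sum_congr rfl fun i hi => (sum_subset (subset_univ B) fun b _ hb => ?_).symm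
          simp only [B, mem_filter, mem_univ, true_and, not_exists, not_and] at hb
          exact Nat.eq_zero_of_not_pos (hb i hi)
      _ = ∑ b ∈ B, ∑ i ∈ W, a i b := sum_comm
      _ ≤ ∑ b ∈ B, ∑ i, a i b := sum_le_sum fun b _ => sum_le_sum_of_subset (subset_univ W)
      _ = D * ∑ b ∈ B, t b := by rw [mul_sum]; exact sum_congr rfl fun b _ => hcol b
  have hslackW : ∑ i ∈ W, (D - ∑ b, a i b) ≤
      D * if ∃ i ∈ W, ∑ b, a i b < D then Fintype.card ι - ∑ b, t b else 0 := by
    split_ifs with h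
    · rw [← sum_sub_sum_eq_mul hrow hcol]
      exact sum_le_sum_of_subset (subset_univ W)
    · push Not at h
      simp [sum_eq_zero fun i hi => Nat.sub_eq_zero_of_le (h i hi)]
  have hW := sum_congr rfl fun i (_ : i ∈ W) => Nat.add_sub_of_le (hrow i)
  simp only [sum_add_distrib, sum_const, smul_eq_mul] at hW
  refine Nat.le_of_mul_le_mul_left ?_ hD
  nlinarith

/-- Rounds the fractional assignment `a i b / D` (row sums at most `1`, column sums `t b`): Hall's
theorem matches every row to one of the `t b` slots of a column `b` with `a i b > 0`, or to one of
the `#ι - ∑ b, t b` dummy slots if its row sum is below `1`. -/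
theorem exists_option_assignment [DecidableEq β] (hD : 0 < D) (hrow : ∀ i, ∑ b, a i b ≤ D)
    (hcol : ∀ b, ∑ i, a i b = D * t b) :
    ∃ c : ι → Option β, (∀ i b, c i = some b → 0 < a i b) ∧
      (∀ i, c i = none → ∑ b, a i b < D) ∧ ∀ b, #{i | c i = some b} = t b := by
  classical
  let κ := (Σ b, Fin (t b)) ⊕ Fin (Fintype.card ι - ∑ b, t b)
  let R : ι → κ → Prop := fun i k => k.elim (fun p => 0 < a i p.1) fun _ => ∑ b, a i b < D
  have hall : ∀ W : Finset ι, #W ≤ #{k | ∃ i ∈ W, R i k} := by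
    intro W
    refine (card_le_sum_add_slack hD hrow hcol W).trans ?_
    let X : Finset (Fin (Fintype.card ι - ∑ b, t b)) :=
      if ∃ i ∈ W, ∑ b, a i b < D then univ else ∅
    have hX : #X = if ∃ i ∈ W, ∑ b, a i b < D then Fintype.card ι - ∑ b, t b else 0 := by
      split_ifs <;> simp [X, *]
    calc _ = #((({b | ∃ i ∈ W, 0 < a i b} : Finset β).sigma fun b => univ).disjSum X) := by
          simp [card_disjSum, card_sigma, hX]
      _ ≤ _ := card_le_card fun k hk => ?_
    simp only [mem_filter, mem_univ, true_and]
    rcases k with ⟨b, j⟩ | j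
    · simpa [R] using hk
    · have hXne : X.Nonempty := ⟨j, by simpa using hk⟩
      simp only [X] at hXne
      split_ifs at hXne with h
      · simpa [R] using h
      · simp at hXne
  obtain ⟨f, hf_inj, hf_rel⟩ := (Fintype.all_card_le_filter_rel_iff_exists_injective R).1 hall
  have hf_bij : Function.Bijective f := by
    refine (Fintype.bijective_iff_injective_and_card f).2 ⟨hf_inj, ?_⟩
    have := sum_le_card_of_sum_eq_mul hD hrow hcol
    simp only [κ, Fintype.card_sum, Fintype.card_sigma, Fintype.card_fin]
    omega
  let slotOf : κ → Option β := Sum.elim (fun p => some p.1) fun _ => none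
  refine ⟨slotOf ∘ f, fun i b hi => ?_, fun i hi => ?_, fun b => ?_⟩
  · have := hf_rel i
    rcases hfi : f i with ⟨b', j⟩ | j <;> simp_all [slotOf, R]
  · have := hf_rel i
    rcases hfi : f i with ⟨b', j⟩ | j <;> simp_all [slotOf, R]
  · simp only [card_filter, Function.comp_apply]
    rw [hf_bij.sum_comp fun k => if slotOf k = some b then 1 else 0]
    simp only [κ, slotOf, Fintype.sum_sum_type, Fintype.sum_sigma, Sum.elim_inl, Sum.elim_inr]
    simp

end Assignment

section ExtendPart

variable {α : Type*} [DecidableEq α] {v : α} {M : Multiset (Finset α)}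

def extendPart (v : α) (M : Multiset (Finset α)) : Option (Finset α) → Multiset (Finset α)
  | none => M
  | some A => insert v A ::ₘ M.erase A

theorem count_extendPart_add_of_notMem {o : Option (Finset α)} (ho : ∀ A ∈ o, A ∈ M)
    {B : Finset α} (hvB : v ∉ B) :
    (extendPart v M o).count B + (if o = some B then 1 else 0) = M.count B := by
  cases o with
  | none => simp [extendPart]
  | some A =>
    have hBA : B ≠ insert v A := fun h => hvB (h ▸ mem_insert_self v A)
    simp only [extendPart, Multiset.count_cons, if_neg hBA, add_zero, Option.some.injEq]
    rcases eq_or_ne A B with rfl | hAB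
    · have := Multiset.count_pos.2 (ho A rfl)
      rw [Multiset.count_erase_self, if_pos rfl]
      omega
    · rw [if_neg hAB, Multiset.count_erase_of_ne hAB.symm, add_zero]

theorem count_extendPart_of_mem (hvM : ∀ A ∈ M, v ∉ A) {o : Option (Finset α)}
    (ho : ∀ A ∈ o, v ∉ A) {B : Finset α} (hvB : v ∈ B) :
    (extendPart v M o).count B = if o = some (B.erase v) then 1 else 0 := by
  have hBM : M.count B = 0 := Multiset.count_eq_zero.2 fun hB => hvM B hB hvB
  cases o with
  | none => simpa [extendPart] using hBM
  | some A =>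
    have hA : B = insert v A ↔ A = B.erase v := by
      constructor
      · rintro rfl; rw [erase_insert (ho A rfl)]
      · rintro rfl; rw [insert_erase hvB]
    have := Multiset.count_le_of_le B (Multiset.erase_le A M)
    simp only [extendPart, Multiset.count_cons, Option.some.injEq, hA]
    omega

theorem sum_map_extendPart_some_add_one {r : ℕ} {A : Finset α} (hA : A ∈ M) (hvA : v ∉ A)
    (hAr : #A < r) :
    ((extendPart v M (some A)).map fun B => r - #B).sum + 1 = (M.map fun B => r - #B).sum := by
  conv_rhs => rw [← Multiset.cons_erase hA]
  simp only [extendPart, Multiset.map_cons, Multiset.sum_cons, card_insert_of_notMem hvA]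
  omega

theorem disjoint_extendPart (hdisj : ∀ A ∈ M, ∀ B ∈ M.erase A, Disjoint A B)
    (hvM : ∀ A ∈ M, v ∉ A) {o : Option (Finset α)} (ho : ∀ A ∈ o, A ∈ M) :
    ∀ X ∈ extendPart v M o, ∀ Y ∈ (extendPart v M o).erase X, Disjoint X Y := by
  cases o with
  | none => exact hdisj
  | some A =>
    have hA := ho A rfl
    intro X hX Y hY
    simp only [extendPart, Multiset.mem_cons] at hX hY
    rcases hX with rfl | hX
    · rw [Multiset.erase_cons_head] at hY
      exact disjoint_insert_left.2 ⟨hvM Y (Multiset.mem_of_mem_erase hY), hdisj A hA Y hY⟩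
    · have hvX := hvM X (Multiset.mem_of_mem_erase hX)
      have hXA : X ≠ insert v A := fun h => hvX (h ▸ mem_insert_self v A)
      rw [Multiset.erase_cons_tail _ hXA.symm, Multiset.mem_cons] at hY
      rcases hY with rfl | hY
      · exact disjoint_insert_right.2 ⟨hvX, (hdisj A hA X hX).symm⟩
      · rw [Multiset.erase_comm] at hY
        exact hdisj X (Multiset.mem_of_mem_erase hX) Y (Multiset.mem_of_mem_erase hY)

end ExtendPart

section Stage

variable {α ι : Type*} [Fintype α] [DecidableEq α] [Fintype ι] {r D : ℕ} {S : Finset α}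
  {M : ι → Multiset (Finset α)}

/-- `M i` lists, with multiplicity, the traces on `S` of the `r`-sets of the `i`-th future matching:
a trace `A` still needs `r - #A` vertices outside `S`, and is the trace of `C(#Sᶜ, r - #A)` of the
`r`-sets in total. The field `disjoint` also forbids repeating a nonempty trace in one part. -/
structure IsBaranyaiStage (r : ℕ) (S : Finset α) (M : ι → Multiset (Finset α)) : Prop where
  subset : ∀ i, ∀ A ∈ M i, A ⊆ S
  card_le : ∀ i, ∀ A ∈ M i, #A ≤ r
  disjoint : ∀ i, ∀ A ∈ M i, ∀ B ∈ (M i).erase A, Disjoint A B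
  deficit_le : ∀ i, ((M i).map fun A => r - #A).sum ≤ #Sᶜ
  sum_count : ∀ A ⊆ S, #A ≤ r → ∑ i, (M i).count A = (#Sᶜ).choose (r - #A)

theorem exists_isBaranyaiStage_empty
    (h : (Fintype.card α).choose r ≤ Fintype.card ι * (Fintype.card α / r)) :
    ∃ M : ι → Multiset (Finset α), IsBaranyaiStage r ∅ M := by
  obtain ⟨a, ha, hsum⟩ := Fintype.exists_forall_le_sum_eq_of_le_card_mul h
  refine ⟨fun i => Multiset.replicate (a i) ∅, ⟨?_, ?_, ?_, ?_, ?_⟩⟩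
  · rintro i A hA
    rw [Multiset.eq_of_mem_replicate hA]
  · rintro i A hA
    simp [Multiset.eq_of_mem_replicate hA]
  · rintro i A hA B -
    simp [Multiset.eq_of_mem_replicate hA]
  · intro i
    simp only [Multiset.map_replicate, card_empty, Nat.sub_zero, Multiset.sum_replicate,
      smul_eq_mul, compl_empty, card_univ]
    exact (Nat.mul_le_mul_right r (ha i)).trans (Nat.div_mul_le_self _ r)
  · intro A hA _
    simp [subset_empty.1 hA, hsum]

/-- Of the `C(D + 1, r - #A)` completions of a trace `A`, `C(D, r - #A - 1)` contain the next
vertex. -/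
def extensionDemand (r D : ℕ) (S A : Finset α) : ℕ :=
  if A ⊆ S ∧ #A < r then D.choose (r - #A - 1) else 0

theorem IsBaranyaiStage.sum_count_mul (hM : IsBaranyaiStage r S M) (hD : #Sᶜ = D + 1)
    (A : Finset α) : ∑ i, (M i).count A * (r - #A) = (D + 1) * extensionDemand r D S A := by
  unfold extensionDemand
  split_ifs with hA
  · obtain ⟨k, hk⟩ : ∃ k, r - #A = k + 1 := ⟨r - #A - 1, by omega⟩
    rw [← sum_mul, hM.sum_count A hA.1 hA.2.le, hD, hk, Nat.add_one_mul_choose_eq,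
      Nat.add_sub_cancel]
  · refine (sum_eq_zero fun i _ => ?_).trans (mul_zero _).symm
    by_cases hAi : A ∈ M i
    · have hle := hM.card_le i A hAi
      have hnlt : ¬#A < r := fun h => hA ⟨hM.subset i A hAi, h⟩
      rw [show r - #A = 0 by omega, mul_zero]
    · rw [Multiset.count_eq_zero.2 hAi, zero_mul]

theorem IsBaranyaiStage.sum_count_extendPart (hM : IsBaranyaiStage r S M) {v : α} (hv : v ∉ S)
    (hD : #Sᶜ = D + 1) (c : ι → Option (Finset α)) (hc : ∀ i A, c i = some A → A ∈ M i)
    (hc_card : ∀ A, #{i | c i = some A} = extensionDemand r D S A) {B : Finset α}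
    (hB : B ⊆ insert v S) (hBr : #B ≤ r) :
    ∑ i, (extendPart v (M i) (c i)).count B = D.choose (r - #B) := by
  have hvM : ∀ i, ∀ A ∈ M i, v ∉ A := fun i A hA hvA => hv (hM.subset i A hA hvA)
  by_cases hvB : v ∈ B
  · have hBpos := card_pos.2 ⟨v, hvB⟩
    have hBv : B.erase v ⊆ S ∧ #(B.erase v) < r :=
      ⟨subset_insert_iff.1 hB, by rw [card_erase_of_mem hvB]; omega⟩
    simp_rw [count_extendPart_of_mem (hvM _) (fun A hA => hvM _ A (hc _ A hA)) hvB]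
    rw [sum_boole, Nat.cast_id, hc_card, extensionDemand, if_pos hBv, card_erase_of_mem hvB]
    congr 1
    omega
  · have hBS : B ⊆ S := (subset_insert_iff_of_notMem hvB).1 hB
    have hsum := sum_congr rfl fun i (_ : i ∈ univ) =>
      count_extendPart_add_of_notMem (v := v) (hc i) hvB
    rw [sum_add_distrib, sum_boole, Nat.cast_id, hc_card, hM.sum_count B hBS hBr, hD,
      extensionDemand] at hsum
    split_ifs at hsum with hBr'
    · obtain ⟨k, hk⟩ : ∃ k, r - #B = k + 1 := ⟨r - #B - 1, by have := hBr'.2; omega⟩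
      rw [hk, Nat.choose_succ_succ', Nat.add_sub_cancel] at hsum
      rw [hk]
      omega
    · rw [Nat.sub_eq_zero_of_le (not_lt.1 fun h => hBr' ⟨hBS, h⟩), Nat.choose_zero_right]
        at hsum ⊢
      omega

theorem IsBaranyaiStage.extend (hM : IsBaranyaiStage r S M) {v : α} (hv : v ∉ S)
    (hD : #Sᶜ = D + 1) (c : ι → Option (Finset α)) (hc : ∀ i A, c i = some A → A ∈ M i ∧ #A < r)
    (hc_none : ∀ i, c i = none → ((M i).map fun A => r - #A).sum ≤ D)
    (hc_card : ∀ A, #{i | c i = some A} = extensionDemand r D S A) :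
    IsBaranyaiStage r (insert v S) fun i => extendPart v (M i) (c i) := by
  have hvM : ∀ i, ∀ A ∈ M i, v ∉ A := fun i A hA hvA => hv (hM.subset i A hA hvA)
  have hD' : #(insert v S)ᶜ = D := by
    rw [compl_insert, card_erase_of_mem (mem_compl.2 hv), hD, Nat.add_sub_cancel]
  refine ⟨fun i B hB => ?_, fun i B hB => ?_, fun i => ?_, fun i => ?_, fun B hB hBr => ?_⟩
  · rcases hci : c i with _ | A <;> simp only [extendPart, hci, Multiset.mem_cons] at hB
    · exact (hM.subset i B hB).trans (subset_insert v S)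
    · rcases hB with rfl | hB
      · exact insert_subset_insert v (hM.subset i A (hc i A hci).1)
      · exact (hM.subset i B (Multiset.mem_of_mem_erase hB)).trans (subset_insert v S)
  · rcases hci : c i with _ | A <;> simp only [extendPart, hci, Multiset.mem_cons] at hB
    · exact hM.card_le i B hB
    · rcases hB with rfl | hB
      · exact (card_insert_le v A).trans (hc i A hci).2
      · exact hM.card_le i B (Multiset.mem_of_mem_erase hB)
  · exact disjoint_extendPart (hM.disjoint i) (hvM i) fun A hA => (hc i A hA).1
  · rw [hD']
    rcases hci : c i with _ | A
    · exact hc_none i hci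
    · have := sum_map_extendPart_some_add_one (hc i A hci).1 (hvM i A (hc i A hci).1)
        (hc i A hci).2
      have := hM.deficit_le i
      omega
  · rw [hD']
    exact hM.sum_count_extendPart hv hD c (fun i A hA => (hc i A hA).1) hc_card hB hBr

theorem IsBaranyaiStage.exists_insert (hM : IsBaranyaiStage r S M) {v : α} (hv : v ∉ S) :
    ∃ M' : ι → Multiset (Finset α), IsBaranyaiStage r (insert v S) M' := by
  obtain ⟨D, hD⟩ : ∃ D, #Sᶜ = D + 1 :=
    ⟨#Sᶜ - 1, (Nat.sub_add_cancel (card_pos.2 ⟨v, mem_compl.2 hv⟩)).symm⟩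
  obtain ⟨c, hc_pos, hc_none, hc_card⟩ := exists_option_assignment (D := D + 1)
    (a := fun i A => (M i).count A * (r - #A)) (t := extensionDemand r D S) (by omega)
    (fun i => by rw [← Multiset.sum_map_eq_sum_count_mul, ← hD]; exact hM.deficit_le i)
    (hM.sum_count_mul hD)
  refine ⟨_, hM.extend hv hD c (fun i A hA => ?_) (fun i hi => ?_) hc_card⟩
  · obtain ⟨hcount, hr⟩ := CanonicallyOrderedAdd.mul_pos.1 (hc_pos i A hA)
    exact ⟨Multiset.count_pos.1 hcount, Nat.lt_of_sub_pos hr⟩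
  · have := hc_none i hi
    rw [← Multiset.sum_map_eq_sum_count_mul] at this
    omega

theorem exists_isBaranyaiStage
    (h : (Fintype.card α).choose r ≤ Fintype.card ι * (Fintype.card α / r)) (S : Finset α) :
    ∃ M : ι → Multiset (Finset α), IsBaranyaiStage r S M := by
  induction S using Finset.induction_on with
  | empty => exact exists_isBaranyaiStage_empty h
  | insert v S hv ih =>
    obtain ⟨M, hM⟩ := ih
    exact hM.exists_insert hv

theorem exists_matching_coloring [Nonempty ι]
    (h : (Fintype.card α).choose r ≤ Fintype.card ι * (Fintype.card α / r)) :
    ∃ g : Finset α → ι,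
      ∀ e f : Finset α, #e = r → #f = r → e ≠ f → g e = g f → Disjoint e f := by
  obtain ⟨M, hM⟩ := exists_isBaranyaiStage (ι := ι) h univ
  have hcover : ∀ e : Finset α, #e = r → ∃ i, e ∈ M i := by
    intro e he
    have hsum := hM.sum_count e (subset_univ e) he.le
    rw [compl_univ, card_empty, he, Nat.sub_self, Nat.choose_self] at hsum
    obtain ⟨i, -, hi⟩ := exists_ne_zero_of_sum_ne_zero (hsum.trans_ne one_ne_zero)
    exact ⟨i, Multiset.count_ne_zero.1 hi⟩
  choose! g hg using hcover
  refine ⟨g, fun e f he hf hef hgef => hM.disjoint _ e (hg e he) f ?_⟩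
  exact (Multiset.mem_erase_of_ne hef.symm).2 (hgef ▸ hg f hf)

end Stage

theorem IsEGZConst.exists_card_eq_sub_one_not_zeroSum {G : Type*} [AddCommGroup G] {m s : ℕ}
    (hs : IsEGZConst G m s) (hm : 0 < m) :
    ∃ S : Multiset G, Multiset.card S = s - 1 ∧
      ¬∃ T, T ≤ S ∧ Multiset.card T = m ∧ T.sum = 0 := by
  by_contra! h
  rcases Nat.eq_zero_or_pos (s - 1) with hs0 | hs0
  · obtain ⟨T, hT, hTm, -⟩ := h 0 (by simp [hs0])
    rw [Multiset.le_zero.1 hT, Multiset.card_zero] at hTm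
    omega
  · have := hs.2 ⟨hs0, h⟩
    omega

theorem not_hasZeroSumIntersecting_comp {G ι : Type*} [AddCommGroup G] [Fintype ι] {r m d : ℕ}
    (x : ι → G) (hx : ¬∃ T, T ≤ univ.val.map x ∧ Multiset.card T = m ∧ T.sum = 0)
    (g : Finset (Fin d) → ι)
    (hg : ∀ e f : Finset (Fin d), #e = r → #f = r → e ≠ f → g e = g f → Disjoint e f) :
    ¬HasZeroSumIntersecting G r m d (x ∘ g) := by
  rintro ⟨F, hFm, hFr, hFint, hFsum⟩
  have hg_inj : Set.InjOn g F := fun e he f hf hef => by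
    by_contra hne
    exact not_disjoint_iff_nonempty_inter.2 (hFint e he f hf)
      (hg e f (hFr e he) (hFr f hf) hne hef)
  refine hx ⟨(F.val.map g).map x, Multiset.map_le_map ?_, by simp [hFm], ?_⟩
  · exact (Multiset.le_iff_subset (F.nodup.map_on hg_inj)).2 fun i _ => mem_univ i
  · rwa [Multiset.map_map, ← sum_eq_multiset_sum]

theorem exists_not_hasZeroSumIntersecting {G : Type*} [AddCommGroup G] {r m d : ℕ} (hm : 0 < m)
    (S : Multiset G) (hS : ¬∃ T, T ≤ S ∧ Multiset.card T = m ∧ T.sum = 0)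
    (h : d.choose r ≤ Multiset.card S * (d / r)) :
    ∃ c : Finset (Fin d) → G, ¬HasZeroSumIntersecting G r m d c := by
  classical
  rcases S.empty_or_exists_mem with rfl | ⟨x, hx⟩
  · refine ⟨0, ?_⟩
    rintro ⟨F, hFm, hFr, -⟩
    obtain ⟨e, he⟩ := card_pos.1 (hFm ▸ hm)
    have hdr : d < r := Nat.choose_eq_zero_iff.1 (by simpa using h)
    have := card_le_univ e
    rw [hFr e he, Fintype.card_fin] at this
    omega
  · have : Nonempty S.ToType := ⟨⟨x, ⟨0, Multiset.count_pos.2 hx⟩⟩⟩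
    obtain ⟨g, hg⟩ := exists_matching_coloring (α := Fin d) (ι := S.ToType) (r := r)
      (by simpa [Multiset.card_coe] using h)
    exact ⟨_, not_hasZeroSumIntersecting_comp _ (by rwa [Multiset.map_univ_coe]) g hg⟩

theorem stmt_9_general (G : Type*) [AddCommGroup G] (r m s n : ℕ)
    (hr : 2 ≤ r) (hm : 0 < m)
    (hs : IsEGZConst G m s)
    (hn : IsLeast {n : ℕ | 0 < n ∧ s ≤ (n - 1).choose (r - 1)} n) :
    ∃ c : Finset (Fin (n - 2)) → G, ¬ HasZeroSumIntersecting G r m (n - 2) c := by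
  obtain ⟨S, hScard, hS⟩ := hs.exists_card_eq_sub_one_not_zeroSum hm
  obtain ⟨⟨hn0, hsn⟩, hmin⟩ := hn
  have hs0 := hs.1.1
  have hn2 : 2 ≤ n := by
    by_contra hn2
    rw [show n - 1 = 0 by omega, Nat.choose_eq_zero_of_lt (by omega)] at hsn
    omega
  have hchoose : (n - 2).choose (r - 1) ≤ s - 1 := by
    by_contra! hlt
    have : n ≤ n - 1 := hmin ⟨by omega, by rw [show n - 1 - 1 = n - 2 by omega]; omega⟩
    omega
  refine exists_not_hasZeroSumIntersecting hm S hS ?_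
  calc (n - 2).choose r ≤ (n - 2).choose (r - 1) * ((n - 2) / r) :=
        Nat.choose_le_choose_sub_one_mul_div _ (by omega)
    _ ≤ Multiset.card S * ((n - 2) / r) := by rw [hScard]; gcongr

/-- Lower bound `R(I_m^{(r)}, G) ≥ Ω(s_m(G)) - 1`: there is a `G`-coloring of the
`r`-subsets of an `(n-2)`-element set with no zero-sum intersecting family of size `m`. -/
theorem stmt_9 (G : Type*) [AddCommGroup G] [Fintype G] (r m s n : ℕ)
    (hr : 2 ≤ r) (hm : 0 < m) (hexp : AddMonoid.exponent G ∣ m)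
    (hs : IsEGZConst G m s)
    (hn : IsLeast {n : ℕ | 0 < n ∧ s ≤ (n - 1).choose (r - 1)} n) :
    ∃ c : Finset (Fin (n - 2)) → G, ¬ HasZeroSumIntersecting G r m (n - 2) c :=
  stmt_9_general G r m s n hr hm hs hn
end

section
/- Let G be a finite abelian group, let r ≥ 2, and let m be a positive multiple of exp(G). Let n = Ω(s_m(G)) be the least positive integer with C(n-1, r-1) ≥ s_m(G). If r divides n - 1, then R(I_m^{(r)}, G) = R(S_m^{(r)}, G) = n. -/
/-!
Upper bound: the `C(n-1, r-1)` edges through a fixed vertex form a star, and among any `s_m(G)`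
of their colours some `m` sum to zero.

Lower bound: when `r ∣ N`, Baranyai's theorem splits the `r`-subsets of an `N`-set into
`C(N-1, r-1)` perfect matchings. For `N = n - 1` there are fewer matchings than `s_m(G)`, so the
matchings can be coloured injectively by the terms of a sequence of length `s_m(G) - 1` without
zero-sum subsequence of length `m`. An intersecting family meets each matching at most once, so
its colours form a subsequence of that sequence and cannot sum to zero.

Baranyai's theorem is proved by adding the vertices one at a time. After `M` vertices there are
`C(N-1, r-1)` partitions of them into `k = N / r` possibly empty parts, in which each set `B`
occurs as often as it has completions to an `r`-set, `C(N-M, r-|B|)` times. The next vertex joins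
one part of each partition, and `B` must be chosen `C(N-M-1, r-1-|B|)` times. Choosing `B` with
weight `C(N-M-1, r-1-|B|) / C(N-M, r-|B|) = (r-|B|) / (N-M)` gives every partition total
weight `1`, and Hall's theorem rounds this fractional choice to an integral one.
-/

open Finset

lemma card_le_sum_of_sum_div_eq_one {ι κ : Type*} [Fintype ι] [DecidableEq κ]
    (P : ι → Multiset κ) (c d : κ → ℕ) (hc : ∀ i, ∀ a ∈ P i, 0 < c a)
    (hcount : ∀ a, ∑ i, (P i).count a ≤ c a)
    (hsum : ∀ i, ((P i).map fun a => (d a / c a : ℚ)).sum = 1) (W : Finset ι) :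
    #W ≤ ∑ a ∈ W.biUnion fun i => (P i).toFinset, d a := by
  set U := W.biUnion fun i => (P i).toFinset
  suffices (#W : ℚ) ≤ ∑ a ∈ U, (d a : ℚ) by exact_mod_cast this
  calc (#W : ℚ) = ∑ i ∈ W, ((P i).map fun a => (d a / c a : ℚ)).sum := by simp [hsum]
    _ = ∑ i ∈ W, ∑ a ∈ U, ((P i).count a : ℚ) * (d a / c a) := by
      refine sum_congr rfl fun i hi => ?_
      rw [sum_multiset_map_count, sum_subset (subset_biUnion_of_mem (fun j => (P j).toFinset) hi)]
      · simp [U]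
      · intro a _ ha
        simp [Multiset.count_eq_zero_of_notMem (by simpa using ha)]
    _ = ∑ a ∈ U, (∑ i ∈ W, (P i).count a : ℚ) * (d a / c a) := by
      rw [sum_comm]
      simp only [sum_mul]
    _ ≤ ∑ a ∈ U, (c a : ℚ) * (d a / c a) := by
      gcongr with a
      exact_mod_cast (sum_le_sum_of_subset (subset_univ W)).trans (hcount a)
    _ = ∑ a ∈ U, (d a : ℚ) := by
      refine sum_congr rfl fun a ha => ?_
      obtain ⟨i, -, hi⟩ := mem_biUnion.mp ha
      have : (c a : ℚ) ≠ 0 := by exact_mod_cast (hc i a (Multiset.mem_toFinset.mp hi)).ne'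
      field_simp

theorem exists_selection_card_fiber_le {ι κ : Type*} [Fintype ι] [DecidableEq κ]
    (P : ι → Multiset κ) (c d : κ → ℕ) (hc : ∀ i, ∀ a ∈ P i, 0 < c a)
    (hcount : ∀ a, ∑ i, (P i).count a ≤ c a)
    (hsum : ∀ i, ((P i).map fun a => (d a / c a : ℚ)).sum = 1) :
    ∃ σ : ι → κ, (∀ i, σ i ∈ P i) ∧ ∀ a, #{i | σ i = a} ≤ d a := by
  -- Hall's theorem, with each `a` replaced by its `d a` copies `⟨a, j⟩`
  let O : ι → Finset (Σ _ : κ, ℕ) := fun i => (P i).toFinset.sigma fun a => range (d a)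
  have hall (W : Finset ι) : #W ≤ #(W.biUnion O) := by
    have hO : W.biUnion O = (W.biUnion fun i => (P i).toFinset).sigma fun a => range (d a) := by
      ext ⟨a, j⟩
      simp only [O, mem_biUnion, mem_sigma]
      tauto
    rw [hO, card_sigma]
    simpa using card_le_sum_of_sum_div_eq_one P c d hc hcount hsum W
  obtain ⟨f, hf_inj, hf⟩ := (all_card_le_biUnion_card_iff_exists_injective O).mp hall
  have hfO (i : ι) : (f i).1 ∈ P i ∧ (f i).2 < d (f i).1 := by simpa [O] using hf i
  refine ⟨fun i => (f i).1, fun i => (hfO i).1, fun a => ?_⟩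
  calc #{i | (f i).1 = a} ≤ #(range (d a)) := by
        refine card_le_card_of_injOn (fun i => (f i).2) (fun i hi => ?_) fun i hi j hj hij => ?_
        · simp only [coe_filter, mem_univ, true_and, Set.mem_ofPred_eq] at hi
          simpa [← hi] using (hfO i).2
        · simp only [coe_filter, mem_univ, true_and, Set.mem_ofPred_eq] at hi hj
          exact hf_inj (Sigma.ext (hi.trans hj.symm) (heq_of_eq hij))
    _ = d a := card_range _

namespace Baranyai

variable {N r k M : ℕ}

/-- The number of `r`-subsets of an `N`-set that meet a fixed `M`-subset in a fixed `a`-set. -/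
def completions (N r M a : ℕ) : ℕ := if a ≤ r then (N - M).choose (r - a) else 0

def initSeg (N M : ℕ) : Finset (Fin N) := {x | (x : ℕ) < M}

lemma initSeg_zero : initSeg N 0 = ∅ := by
  ext x
  simp [initSeg]

lemma initSeg_self : initSeg N N = univ := by
  ext x
  simp [initSeg]

lemma initSeg_succ (hM : M < N) : initSeg N (M + 1) = insert ⟨M, hM⟩ (initSeg N M) := by
  ext x
  simp only [initSeg, mem_filter, mem_univ, true_and, mem_insert, Fin.ext_iff]
  omega

lemma card_initSeg (hM : M ≤ N) : #(initSeg N M) = M := by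
  rw [initSeg, Fin.card_filter_val_lt, min_eq_right hM]

lemma completions_eq_add (hM : M < N) (a : ℕ) :
    completions N r M a = completions N r (M + 1) a + completions N r (M + 1) (a + 1) := by
  unfold completions
  obtain ⟨u, hu⟩ : ∃ u, N - M = u + 1 := ⟨N - M - 1, by omega⟩
  rcases lt_trichotomy a r with h | rfl | h
  · obtain ⟨w, hw⟩ : ∃ w, r - a = w + 1 := ⟨r - a - 1, by omega⟩
    rw [if_pos h.le, if_pos h.le, if_pos (Nat.succ_le_of_lt h), hu, hw,
      show N - (M + 1) = u by omega, show r - (a + 1) = w by omega, Nat.choose_succ_succ', add_comm]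
  · simp
  · simp [h.not_ge, (h.trans (Nat.lt_succ_self a)).not_ge]

lemma sub_mul_completions (hM : M < N) {a : ℕ} (ha : a ≤ r) :
    (r - a) * completions N r M a = (N - M) * completions N r (M + 1) (a + 1) := by
  unfold completions
  rcases ha.eq_or_lt with rfl | h
  · simp
  obtain ⟨u, hu⟩ : ∃ u, N - M = u + 1 := ⟨N - M - 1, by omega⟩
  obtain ⟨w, hw⟩ : ∃ w, r - a = w + 1 := ⟨r - a - 1, by omega⟩
  rw [if_pos ha, if_pos (Nat.succ_le_of_lt h), hu, hw, show N - (M + 1) = u by omega,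
    show r - (a + 1) = w by omega, Nat.add_one_mul_choose_eq, mul_comm]

lemma sum_choose_mul_completions (hM : M < N) (hr : 0 < r) :
    ∑ a ∈ range (M + 1), M.choose a * completions N r (M + 1) (a + 1) =
      (N - 1).choose (r - 1) := by
  have hvdm := Nat.add_choose_eq M (N - M - 1) (r - 1)
  rw [show M + (N - M - 1) = N - 1 by omega, Nat.sum_antidiagonal_eq_sum_range_succ_mk,
    Nat.succ_eq_add_one, show r - 1 + 1 = r by omega] at hvdm
  have hext : ∀ s ⊆ range (M + r),
      (∀ a ∉ s, M.choose a * completions N r (M + 1) (a + 1) = 0) →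
      ∑ a ∈ s, M.choose a * completions N r (M + 1) (a + 1) =
        ∑ a ∈ range (M + r), M.choose a * completions N r (M + 1) (a + 1) :=
    fun s hs h0 => sum_subset hs fun a _ ha => h0 a ha
  rw [hvdm, hext _ (range_subset_range.mpr (by omega)) fun a ha => ?_,
    ← hext (range r) (range_subset_range.mpr (by omega)) fun a ha => ?_]
  · refine sum_congr rfl fun a ha => ?_
    rw [completions, if_pos (Nat.succ_le_of_lt (mem_range.mp ha)),
      show N - (M + 1) = N - M - 1 by omega, show r - (a + 1) = r - 1 - a by omega]
  · rw [completions, if_neg (by simpa using ha), mul_zero]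
  · rw [Nat.choose_eq_zero_of_lt (by simpa using ha), zero_mul]

lemma choose_mul_eq_completions_zero (hr : 0 < r) (hN : N = r * k) :
    (N - 1).choose (r - 1) * k = completions N r 0 0 := by
  rw [completions, if_pos (Nat.zero_le r), Nat.sub_zero, Nat.sub_zero]
  rcases Nat.eq_zero_or_pos N with rfl | hN0
  · simp [(Nat.mul_eq_zero.mp hN.symm).resolve_left hr.ne', Nat.choose_eq_zero_of_lt hr]
  · apply Nat.eq_of_mul_eq_mul_left hr
    have h := Nat.add_one_mul_choose_eq (N - 1) (r - 1)
    rw [Nat.sub_add_cancel hN0, Nat.sub_add_cancel hr] at h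
    rw [mul_comm r (N.choose r), ← h, hN]
    ring

/-- Each `P i` encodes a partition of `initSeg N M` into `k` parts, empty parts allowed:
`bind_eq` says that the parts are disjoint and cover `initSeg N M`. -/
structure IsStage (N r k M : ℕ) {ι : Type*} [Fintype ι] (P : ι → Multiset (Finset (Fin N))) :
    Prop where
  card_eq : ∀ i, Multiset.card (P i) = k
  bind_eq : ∀ i, (P i).bind Finset.val = (initSeg N M).val
  sum_count_eq : ∀ B ⊆ initSeg N M, ∑ i, (P i).count B = completions N r M #B

namespace IsStage

variable {ι : Type*} [Fintype ι] {P : ι → Multiset (Finset (Fin N))} {i : ι}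
  {A B : Finset (Fin N)}

lemma subset_initSeg (hP : IsStage N r k M P) (hA : A ∈ P i) : A ⊆ initSeg N M :=
  val_le_iff.mp (hP.bind_eq i ▸ Multiset.le_bind (P i) hA)

lemma disjoint (hP : IsStage N r k M P) (hA : A ∈ P i) (hB : B ∈ P i) (hAB : A ≠ B) :
    Disjoint A B := by
  obtain ⟨Q, hQ⟩ := Multiset.exists_cons_of_mem hA
  obtain ⟨Q', rfl⟩ := Multiset.exists_cons_of_mem
    ((Multiset.mem_cons.mp (hQ ▸ hB)).resolve_left hAB.symm)
  have h := (initSeg N M).nodup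
  rw [← hP.bind_eq i, hQ, Multiset.cons_bind, Multiset.cons_bind, ← add_assoc] at h
  exact disjoint_val.mp (Multiset.nodup_add.mp (Multiset.nodup_add.mp h).1).2.2

lemma completions_pos (hP : IsStage N r k M P) (hA : A ∈ P i) : 0 < completions N r M #A :=
  hP.sum_count_eq A (hP.subset_initSeg hA) ▸ (Multiset.count_pos.mpr hA).trans_le
    (single_le_sum (f := fun j => (P j).count A) (fun _ _ => Nat.zero_le _) (mem_univ i))

lemma card_le (hP : IsStage N r k M P) (hA : A ∈ P i) : #A ≤ r := by
  by_contra h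
  simpa [completions, h] using hP.completions_pos hA

lemma sum_card (hP : IsStage N r k M P) (hM : M ≤ N) (i : ι) :
    ((P i).map Finset.card).sum = M := by
  rw [← card_initSeg hM, card_def, ← hP.bind_eq i, Multiset.card_bind]
  rfl

lemma sum_div_eq_one (hP : IsStage N r k M P) (hN : N = r * k) (hM : M < N) (i : ι) :
    ((P i).map fun A => (completions N r (M + 1) (#A + 1) / completions N r M #A : ℚ)).sum =
      1 := by
  have hNM : ((N - M : ℕ) : ℚ) ≠ 0 := by exact_mod_cast (Nat.sub_pos_of_lt hM).ne'
  have hterm : ∀ A ∈ P i, (completions N r (M + 1) (#A + 1) / completions N r M #A : ℚ) =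
      ((r - #A : ℕ) : ℚ) / (N - M : ℕ) := fun A hA => by
    have hc : (completions N r M #A : ℚ) ≠ 0 := by exact_mod_cast (hP.completions_pos hA).ne'
    rw [div_eq_div_iff hc hNM]
    exact_mod_cast (mul_comm _ _).trans (sub_mul_completions hM (hP.card_le hA)).symm
  have hsum : ((P i).map fun A => r - #A).sum = N - M := by
    have h := congrArg Multiset.sum
      (Multiset.map_congr rfl fun A hA => Nat.sub_add_cancel (hP.card_le (i := i) (A := A) hA))
    rw [Multiset.sum_map_add, Multiset.map_const', Multiset.sum_replicate, hP.card_eq,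
      smul_eq_mul] at h
    have := hP.sum_card hM.le i
    have hkr : k * r = N := by rw [hN, mul_comm]
    omega
  rw [Multiset.map_congr rfl hterm, Multiset.sum_map_div, div_eq_one_iff_eq hNM, ← hsum,
    Nat.cast_multiset_sum, Multiset.map_map]
  rfl

lemma exists_selection (hP : IsStage N r k M P) (hι : Fintype.card ι = (N - 1).choose (r - 1))
    (hr : 0 < r) (hN : N = r * k) (hM : M < N) :
    ∃ σ : ι → Finset (Fin N), (∀ i, σ i ∈ P i) ∧
      ∀ B ⊆ initSeg N M, #{i | σ i = B} = completions N r (M + 1) (#B + 1) := by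
  have hcount (A : Finset (Fin N)) : ∑ i, (P i).count A ≤ completions N r M #A := by
    by_cases hA : A ⊆ initSeg N M
    · exact (hP.sum_count_eq A hA).le
    · rw [sum_eq_zero fun i _ => Multiset.count_eq_zero.mpr fun h => hA (hP.subset_initSeg h)]
      exact Nat.zero_le _
  obtain ⟨σ, hσP, hσle⟩ := exists_selection_card_fiber_le P _ _
    (fun _ _ hA => hP.completions_pos hA) hcount (hP.sum_div_eq_one hN hM)
  -- the upper bounds `hσle` add up to `#ι`, so none of them is strict
  have hfib : ∑ B ∈ (initSeg N M).powerset, #{i | σ i = B} = Fintype.card ι :=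
    (card_eq_sum_card_fiberwise fun i _ => mem_powerset.mpr (hP.subset_initSeg (hσP i))).symm
  have htot : ∑ B ∈ (initSeg N M).powerset, completions N r (M + 1) (#B + 1) =
      Fintype.card ι := by
    rw [sum_powerset_apply_card (fun a => completions N r (M + 1) (a + 1)), card_initSeg hM.le,
      hι, ← sum_choose_mul_completions hM hr]
    simp only [smul_eq_mul]
  exact ⟨σ, hσP, fun B hB => (sum_eq_sum_iff_of_le fun B _ => hσle B).mp
    (hfib.trans htot.symm) B (mem_powerset.mpr hB)⟩

lemma sum_count_insert (hP : IsStage N r k M P) (hM : M < N) {σ : ι → Finset (Fin N)}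
    (hσP : ∀ i, σ i ∈ P i)
    (hσ : ∀ B ⊆ initSeg N M, #{i | σ i = B} = completions N r (M + 1) (#B + 1))
    (hB : B ⊆ initSeg N (M + 1)) :
    ∑ i, (insert ⟨M, hM⟩ (σ i) ::ₘ (P i).erase (σ i)).count B =
      completions N r (M + 1) #B := by
  set x : Fin N := ⟨M, hM⟩
  rw [initSeg_succ hM] at hB
  have hx (i : ι) : x ∉ σ i := fun h => by simpa [initSeg, x] using hP.subset_initSeg (hσP i) h
  by_cases hxB : x ∈ B
  · have hterm (i : ι) : (insert x (σ i) ::ₘ (P i).erase (σ i)).count B =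
        if σ i = B.erase x then 1 else 0 := by
      rw [Multiset.count_cons, Multiset.count_eq_zero.mpr fun h => by
        simpa [initSeg, x] using hP.subset_initSeg (Multiset.mem_of_mem_erase h) hxB, zero_add]
      refine if_congr ⟨fun h => ?_, fun h => ?_⟩ rfl rfl
      · rw [h, erase_insert (hx i)]
      · rw [h, insert_erase hxB]
    rw [sum_congr rfl fun i _ => hterm i, ← card_filter, hσ _ (subset_insert_iff.mp hB),
      card_erase_add_one hxB]
  · have hB' := (subset_insert_iff_of_notMem hxB).mp hB
    have hterm (i : ι) : (insert x (σ i) ::ₘ (P i).erase (σ i)).count B +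
        (if σ i = B then 1 else 0) = (P i).count B := by
      have hBσ : B ≠ insert x (σ i) := fun h => hxB (h ▸ mem_insert_self _ _)
      rw [Multiset.count_cons, if_neg hBσ,
        add_zero, ← Multiset.cons_erase (hσP i), Multiset.count_cons, Multiset.erase_cons_head]
      exact congrArg _ (if_congr eq_comm rfl rfl)
    have h := hP.sum_count_eq B hB'
    rw [← sum_congr rfl fun i _ => hterm i, sum_add_distrib, ← card_filter, hσ B hB',
      completions_eq_add hM] at h
    omega

lemma exists_succ (hP : IsStage N r k M P) (hι : Fintype.card ι = (N - 1).choose (r - 1))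
    (hr : 0 < r) (hN : N = r * k) (hM : M < N) :
    ∃ Q : ι → Multiset (Finset (Fin N)), IsStage N r k (M + 1) Q := by
  obtain ⟨σ, hσP, hσ⟩ := hP.exists_selection hι hr hN hM
  have hx : (⟨M, hM⟩ : Fin N) ∉ initSeg N M := by simp [initSeg]
  refine ⟨fun i => insert ⟨M, hM⟩ (σ i) ::ₘ (P i).erase (σ i), fun i => ?_, fun i => ?_,
    fun B hB => hP.sum_count_insert hM hσP hσ hB⟩
  · rw [Multiset.card_cons, Multiset.card_erase_add_one (hσP i), hP.card_eq]
  · rw [Multiset.cons_bind, insert_val_of_notMem fun h => hx (hP.subset_initSeg (hσP i) h),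
      Multiset.cons_add, ← Multiset.cons_bind, Multiset.cons_erase (hσP i), hP.bind_eq,
      initSeg_succ hM, insert_val_of_notMem hx]

end IsStage

variable {ι : Type*} [Fintype ι]

lemma isStage_zero (hr : 0 < r) (hN : N = r * k) (hι : Fintype.card ι = (N - 1).choose (r - 1)) :
    IsStage N r k 0 fun _ : ι => Multiset.replicate k ∅ where
  card_eq _ := Multiset.card_replicate _ _
  bind_eq _ := by simp [initSeg_zero, ← Multiset.card_eq_zero, Multiset.card_bind]
  sum_count_eq B hB := by
    obtain rfl := subset_empty.mp (initSeg_zero (N := N) ▸ hB)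
    simp [hι, choose_mul_eq_completions_zero hr hN]

lemma exists_isStage (hr : 0 < r) (hN : N = r * k)
    (hι : Fintype.card ι = (N - 1).choose (r - 1)) :
    ∀ M ≤ N, ∃ P : ι → Multiset (Finset (Fin N)), IsStage N r k M P
  | 0, _ => ⟨_, isStage_zero hr hN hι⟩
  | M + 1, hM =>
    have ⟨_, hP⟩ := exists_isStage hr hN hι M (Nat.le_of_succ_le hM)
    hP.exists_succ hι hr hN hM

theorem exists_coloring_disjoint (hr : 0 < r) (hN : 0 < N) (hrN : r ∣ N) :
    ∃ φ : Finset (Fin N) → Fin ((N - 1).choose (r - 1)),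
      ∀ e f, #e = r → #f = r → e ≠ f → φ e = φ f → Disjoint e f := by
  obtain ⟨k, hk⟩ := hrN
  obtain ⟨P, hP⟩ := exists_isStage hr hk (Fintype.card_fin _) N le_rfl
  have hmem (e : Finset (Fin N)) (he : #e = r) : ∃ i, e ∈ P i := by
    have h := hP.sum_count_eq e (initSeg_self ▸ subset_univ e)
    rw [completions, he, if_pos le_rfl, Nat.sub_self, Nat.sub_self, Nat.choose_zero_right] at h
    obtain ⟨i, -, hi⟩ := exists_ne_zero_of_sum_ne_zero (h ▸ one_ne_zero)
    exact ⟨i, Multiset.count_ne_zero.mp hi⟩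
  have hpos : 0 < (N - 1).choose (r - 1) :=
    Nat.choose_pos (by have := Nat.le_of_dvd hN ⟨k, hk⟩; omega)
  choose φ hφ using fun e => if he : #e = r then (hmem e he).imp fun _ h _ => h
    else ⟨⟨0, hpos⟩, fun h => absurd h he⟩
  exact ⟨φ, fun e f he hf hef hφef => hP.disjoint (hφ e he) (hφef ▸ hφ f hf) hef⟩

end Baranyai

lemma Multiset.exists_le_map_eq {α β : Type*} (f : α → β) (S : Multiset α) {T : Multiset β}
    (hT : T ≤ S.map f) : ∃ U ≤ S, U.map f = T := by
  classical
  induction S using Multiset.induction_on generalizing T with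
  | empty => exact ⟨0, le_rfl, (Multiset.le_zero.mp hT).symm⟩
  | cons a S ih =>
    rw [Multiset.map_cons] at hT
    by_cases ha : f a ∈ T
    · obtain ⟨T', rfl⟩ := Multiset.exists_cons_of_mem ha
      obtain ⟨U, hU, rfl⟩ := ih ((Multiset.cons_le_cons_iff _).mp hT)
      exact ⟨a ::ₘ U, Multiset.cons_le_cons a hU, Multiset.map_cons f a U⟩
    · obtain ⟨U, hU, rfl⟩ := ih ((Multiset.le_cons_of_notMem ha).mp hT)
      exact ⟨U, hU.trans (Multiset.le_cons_self S a), rfl⟩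

lemma Multiset.map_get_toList_le {α : Type*} (S : Multiset α) (I : Finset (Fin S.toList.length)) :
    I.val.map S.toList.get ≤ S :=
  calc I.val.map S.toList.get ≤ univ.val.map S.toList.get :=
        Multiset.map_le_map (val_le_iff.mpr (subset_univ I))
    _ = S := by rw [Fin.univ_val_map, List.ofFn_get, Multiset.coe_toList]

section ZeroSum

variable {G : Type*} [AddCommGroup G] {r m s : ℕ}

lemma IsEGZConst.exists_subset_sum_eq_zero (hs : IsEGZConst G m s) {ι : Type*} {E : Finset ι}
    (c : ι → G) (hE : s ≤ #E) : ∃ F ⊆ E, #F = m ∧ ∑ e ∈ F, c e = 0 := by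
  obtain ⟨E', hE'E, hE'⟩ := exists_subset_card_eq hE
  obtain ⟨T, hT, hTm, hT0⟩ := hs.1.2 (E'.val.map c) (by rw [Multiset.card_map, card_val, hE'])
  obtain ⟨U, hU, rfl⟩ := Multiset.exists_le_map_eq c E'.val hT
  exact ⟨⟨U, Multiset.nodup_of_le hU E'.nodup⟩, fun x hx => hE'E (Multiset.mem_of_le hU hx),
    by rw [← hTm, Multiset.card_map]; rfl, hT0⟩

lemma IsEGZConst.exists_forall_sum_ne_zero (hs : IsEGZConst G m s) (h : 1 < s) :
    ∃ S : Multiset G, Multiset.card S = s - 1 ∧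
      ∀ T ≤ S, Multiset.card T = m → T.sum ≠ 0 := by
  by_contra! hS
  have : s ≤ s - 1 := hs.2 ⟨by omega, fun S hS' => by simpa using hS S hS'⟩
  omega

lemma HasZeroSumStar.hasZeroSumIntersecting {d : ℕ} {c : Finset (Fin d) → G}
    (h : HasZeroSumStar G r m d c) : HasZeroSumIntersecting G r m d c :=
  have ⟨v, F, hFm, hF, hF0⟩ := h
  ⟨F, hFm, fun e he => (hF e he).1,
    fun e he f hf => ⟨v, mem_inter.mpr ⟨(hF e he).2, (hF f hf).2⟩⟩, hF0⟩

lemma HasZeroSumIntersecting.of_restrict {d d' : ℕ} (h : d ≤ d') {c : Finset (Fin d') → G}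
    (hc : HasZeroSumIntersecting G r m d fun e => c (e.map (Fin.castLEEmb h))) :
    HasZeroSumIntersecting G r m d' c := by
  obtain ⟨F, hFm, hFr, hFint, hF0⟩ := hc
  have hinj : Set.InjOn (Finset.map (Fin.castLEEmb h)) F := (map_injective _).injOn
  refine ⟨F.image (Finset.map (Fin.castLEEmb h)), by rw [card_image_of_injOn hinj, hFm],
    ?_, ?_, ?_⟩
  · simpa using hFr
  · simp only [mem_image]
    rintro _ ⟨e, he, rfl⟩ _ ⟨f, hf, rfl⟩
    exact map_inter (f := Fin.castLEEmb h) e f ▸ (hFint e he f hf).map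
  · rwa [sum_image fun e he f hf hef => hinj he hf hef]

lemma hasZeroSumStar_of_le_choose (hr : 0 < r) (hs : IsEGZConst G m s) {n : ℕ} (hn : 0 < n)
    (hsn : s ≤ (n - 1).choose (r - 1)) (c : Finset (Fin n) → G) : HasZeroSumStar G r m n c := by
  let v : Fin n := ⟨0, hn⟩
  have hE := card_filter_powersetCard_subset {v} univ r (subset_univ _) (by rwa [card_singleton])
  rw [card_univ, Fintype.card_fin, card_singleton] at hE
  obtain ⟨F, hFE, hFm, hF0⟩ := hs.exists_subset_sum_eq_zero c (hE ▸ hsn)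
  refine ⟨v, F, hFm, fun e he => ?_, hF0⟩
  simpa using hFE he

theorem exists_coloring_not_hasZeroSumIntersecting (hr : 0 < r) (hs : IsEGZConst G m s) {N : ℕ}
    (hN : 0 < N) (hrN : r ∣ N) (hNs : (N - 1).choose (r - 1) < s) :
    ∃ c : Finset (Fin N) → G, ¬ HasZeroSumIntersecting G r m N c := by
  obtain ⟨φ, hφ⟩ := Baranyai.exists_coloring_disjoint hr hN hrN
  have ht : 0 < (N - 1).choose (r - 1) :=
    Nat.choose_pos (by have := Nat.le_of_dvd hN hrN; omega)
  obtain ⟨S, hS, hS0⟩ := hs.exists_forall_sum_ne_zero (by omega)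
  have htS : (N - 1).choose (r - 1) ≤ S.toList.length := by rw [Multiset.length_toList, hS]; omega
  let ψ e := Fin.castLE htS (φ e)
  refine ⟨fun e => S.toList.get (ψ e), fun ⟨F, hFm, hFr, hFint, hF0⟩ => ?_⟩
  have hinj : Set.InjOn ψ F := fun e he f hf hef => by_contra fun hne =>
    (hFint e he f hf).ne_empty <| disjoint_iff_inter_eq_empty.mp <|
      hφ e f (hFr e he) (hFr f hf) hne (Fin.castLE_injective htS hef)
  refine hS0 _ (S.map_get_toList_le (F.image ψ)) ?_ ?_
  · rw [image_val_of_injOn hinj, Multiset.card_map, Multiset.card_map]; exact hFm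
  · rwa [image_val_of_injOn hinj, Multiset.map_map]

lemma lt_of_forall_hasZeroSumIntersecting {N d : ℕ} {c : Finset (Fin N) → G}
    (hc : ¬ HasZeroSumIntersecting G r m N c) (hd : ∀ c, HasZeroSumIntersecting G r m d c) :
    N < d := by
  by_contra! h
  exact hc (HasZeroSumIntersecting.of_restrict h (hd _))

end ZeroSum

theorem stmt_10_general (G : Type*) [AddCommGroup G] (r m s n RI RS : ℕ)
    (hr : 2 ≤ r)
    (hs : IsEGZConst G m s)
    (hn : IsLeast {n : ℕ | 0 < n ∧ s ≤ (n - 1).choose (r - 1)} n)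
    (hdvd : r ∣ n - 1)
    (hRI : IsIntRamsey G r m RI) (hRS : IsStarRamsey G r m RS) :
    RI = n ∧ RS = n := by
  obtain ⟨⟨hn0, hsn⟩, hmin⟩ := hn
  have hn1 : 1 < n := by
    by_contra! h
    obtain rfl : n = 1 := by omega
    rw [Nat.sub_self, Nat.choose_eq_zero_of_lt (by omega)] at hsn
    exact (hs.1.1.trans_le hsn).false
  have hstar (c : Finset (Fin n) → G) : HasZeroSumStar G r m n c :=
    hasZeroSumStar_of_le_choose (by omega) hs hn0 hsn c
  have hbelow : (n - 1 - 1).choose (r - 1) < s := by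
    by_contra! h
    have : n ≤ n - 1 := hmin ⟨by omega, h⟩
    omega
  obtain ⟨c, hc⟩ :=
    exists_coloring_not_hasZeroSumIntersecting (by omega) hs (by omega) hdvd hbelow
  have hlow (d : ℕ) (hd : ∀ c, HasZeroSumIntersecting G r m d c) : n ≤ d := by
    have := lt_of_forall_hasZeroSumIntersecting hc hd
    omega
  refine ⟨hRI.unique ⟨⟨hn0, fun c => (hstar c).hasZeroSumIntersecting⟩, fun d hd => ?_⟩,
    hRS.unique ⟨⟨hn0, hstar⟩, fun d hd => ?_⟩⟩
  · exact hlow d hd.2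
  · exact hlow d fun c => (hd.2 c).hasZeroSumIntersecting

/-- If `r ∣ n - 1` where `n = Ω(s_m(G))`, then
`R(I_m^{(r)}, G) = R(S_m^{(r)}, G) = n`. -/
theorem stmt_10 (G : Type*) [AddCommGroup G] [Fintype G] (r m s n RI RS : ℕ)
    (hr : 2 ≤ r) (hm : 0 < m) (hexp : AddMonoid.exponent G ∣ m)
    (hs : IsEGZConst G m s)
    (hn : IsLeast {n : ℕ | 0 < n ∧ s ≤ (n - 1).choose (r - 1)} n)
    (hdvd : r ∣ n - 1)
    (hRI : IsIntRamsey G r m RI) (hRS : IsStarRamsey G r m RS) :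
    RI = n ∧ RS = n :=
  stmt_10_general G r m s n RI RS hr hs hn hdvd hRI hRS
end

section
/- Let G be a finite abelian group and m a positive multiple of exp(G). Then s_m(G) ≤ R(K_{1,m}, G) ≤ s_m(G) + 1, where R(K_{1,m}, G) is the smallest d such that every G-coloring of the edges of the complete graph K_d contains a star with m edges whose edge-colors sum to zero. Moreover, if s_m(G) is even then R(K_{1,m}, G) = s_m(G) + 1. -/
/-!
Colour the edge `{x, y}` of `K_d` by `a x + a y`. A zero-sum star with centre `v` and leaf set
`U` then gives `m • a v + ∑ u ∈ U, a u = 0`, and `m • a v = 0` because `exp G ∣ m`; so the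
leaves form a zero-sum subsequence of length `m` and `s ≤ R`. Conversely, the `s` edges at one
vertex of `K_{s+1}` contain `m` edges of zero sum, so `R ≤ s + 1`.

If `s` is even, `n = s - 1` is odd and `K_{n+1}` has a proper edge colouring with `n` colours
(on `ℤ/n ∪ {∞}`: `{x, y} ↦ x + y`, `{x, ∞} ↦ 2x`). Composing it with a sequence of length `n`
without zero-sum subsequence of length `m` colours `K_s` without zero-sum star, so `R ≠ s`.
-/

open Finset

namespace Multiset

lemma exists_le_map_eq_s11 {α β : Type*} {f : α → β} {s : Multiset α} {t : Multiset β}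
    (h : t ≤ s.map f) : ∃ u ≤ s, u.map f = t := by
  induction s using Quotient.inductionOn
  induction t using Quotient.inductionOn
  obtain ⟨l, hperm, hsub⟩ := coe_le.1 h
  obtain ⟨l', hl', rfl⟩ := List.sublist_map_iff.1 hsub
  exact ⟨l', coe_le.2 hl'.subperm, coe_eq_coe.2 hperm⟩

lemma exists_univ_val_map_eq {α : Type*} {d : ℕ} (S : Multiset α) (hS : card S = d) :
    ∃ a : Fin d → α, univ.val.map a = S := by
  obtain ⟨l, rfl⟩ : ∃ l : List α, ↑l = S := ⟨S.toList, S.coe_toList⟩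
  rw [coe_card] at hS
  subst hS
  exact ⟨l.get, by rw [Fin.univ_val_map, List.ofFn_get]⟩

end Multiset

namespace Finset

lemma exists_eq_pair_of_card_eq_two_of_mem {α : Type*} [DecidableEq α] {v : α}
    {e : Finset α} (he : #e = 2) (hv : v ∈ e) : ∃ u, u ≠ v ∧ e = {v, u} := by
  obtain ⟨x, y, hxy, rfl⟩ := card_eq_two.1 he
  rcases mem_insert.1 hv with rfl | hy
  · exact ⟨y, hxy.symm, rfl⟩
  · obtain rfl := mem_singleton.1 hy
    exact ⟨x, hxy, pair_comm x v⟩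

lemma pair_injOn {α : Type*} [DecidableEq α] (v : α) :
    Set.InjOn (fun u => ({v, u} : Finset α)) {v}ᶜ := by
  intro u hu u' _ (h : ({v, u} : Finset α) = {v, u'})
  have : u ∈ ({v, u'} : Finset α) := h ▸ mem_insert_of_mem (mem_singleton_self u)
  simpa [Set.mem_compl_singleton_iff.1 hu] using this

end Finset

section OneFactorization

variable {n : ℕ}

/-- Vertex `x < n` of `K_{n+1}` stands for `x ∈ ℤ/n` and `Fin.last n` for `∞` (read as `0`),
so that the colour of `{x, y}` is `x + y` and that of `{x, ∞}` is `2x`. -/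
def oneFactorizationColor (n : ℕ) (e : Finset (Fin (n + 1))) : ZMod n :=
  if Fin.last n ∈ e then 2 * ∑ i ∈ e, ((i : ℕ) : ZMod n) else ∑ i ∈ e, ((i : ℕ) : ZMod n)

lemma natCast_val_injOn_compl_last (n : ℕ) :
    Set.InjOn (fun i : Fin (n + 1) => ((i : ℕ) : ZMod n)) {Fin.last n}ᶜ := by
  intro i hi j hj (h : ((i : ℕ) : ZMod n) = j)
  rw [ZMod.natCast_eq_natCast_iff', Nat.mod_eq_of_lt (Fin.val_lt_last hi),
    Nat.mod_eq_of_lt (Fin.val_lt_last hj)] at h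
  exact Fin.ext h

lemma oneFactorizationColor_pair {v u : Fin (n + 1)} (h : u ≠ v) :
    oneFactorizationColor n {v, u} =
      if v = Fin.last n then 2 * ((u : ℕ) : ZMod n)
      else if u = Fin.last n then 2 * ((v : ℕ) : ZMod n)
      else ((v : ℕ) : ZMod n) + ((u : ℕ) : ZMod n) := by
  simp only [oneFactorizationColor, sum_pair h.symm, mem_insert, mem_singleton]
  split_ifs <;> simp_all [eq_comm]

lemma oneFactorizationColor_injOn (hn : Odd n) (v : Fin (n + 1)) :
    Set.InjOn (fun u => oneFactorizationColor n {v, u}) {v}ᶜ := by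
  have h2 : IsUnit (2 : ZMod n) := by
    exact_mod_cast (ZMod.isUnit_iff_coprime 2 n).2 (Nat.coprime_two_left.2 hn)
  have hι := natCast_val_injOn_compl_last n
  intro u hu u' hu' h
  simp only [Set.mem_compl_singleton_iff] at hu hu'
  simp only [oneFactorizationColor_pair hu, oneFactorizationColor_pair hu'] at h
  split_ifs at h with hv hul hu'l hu'l
  · exact hι (hv ▸ hu) (hv ▸ hu') (h2.mul_left_cancel h)
  · rw [hul, hu'l]
  · rw [two_mul] at h
    exact absurd (hι hv hu'l (add_left_cancel h)).symm hu'
  · rw [two_mul] at h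
    exact absurd (hι hv hul (add_left_cancel h.symm)).symm hu
  · exact hι hul hu'l (add_left_cancel h)

lemma exists_properEdgeColoring (hn : Odd n) :
    ∃ φ : Finset (Fin (n + 1)) → Fin n, ∀ v, Set.InjOn (fun u => φ {v, u}) {v}ᶜ := by
  have : NeZero n := ⟨hn.pos.ne'⟩
  exact ⟨(ZMod.finEquiv n).symm ∘ oneFactorizationColor n,
    fun v => (ZMod.finEquiv n).symm.injective.comp_injOn (oneFactorizationColor_injOn hn v)⟩

end OneFactorization

def ForcesZeroSumSubseq (G : Type*) [AddCommGroup G] (m d : ℕ) : Prop :=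
  ∀ a : Fin d → G, ∃ I : Finset (Fin d), #I = m ∧ ∑ i ∈ I, a i = 0

def ForcesZeroSumStar (G : Type*) [AddCommGroup G] (m d : ℕ) : Prop :=
  ∀ c : Finset (Fin d) → G, HasZeroSumStar G 2 m d c

section

variable {G : Type*} [AddCommGroup G]

lemma forcesZeroSumSubseq_iff {m d : ℕ} :
    (∀ S : Multiset G, Multiset.card S = d → ∃ T, T ≤ S ∧ Multiset.card T = m ∧ T.sum = 0) ↔
      ForcesZeroSumSubseq G m d := by
  constructor
  · intro h a
    obtain ⟨T, hTS, hTm, hT0⟩ := h (univ.val.map a) (by simp)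
    obtain ⟨I, hI, rfl⟩ := Multiset.exists_le_map_eq_s11 hTS
    exact ⟨⟨I, Multiset.nodup_of_le hI univ.nodup⟩, by simpa using hTm, hT0⟩
  · rintro h S hS
    obtain ⟨a, rfl⟩ := S.exists_univ_val_map_eq hS
    obtain ⟨I, hIm, hI0⟩ := h a
    exact ⟨I.val.map a, Multiset.map_le_map (val_le_iff.2 (subset_univ I)), by simpa, hI0⟩

lemma isEGZConst_iff {m s : ℕ} :
    IsEGZConst G m s ↔ IsLeast {d | 0 < d ∧ ForcesZeroSumSubseq G m d} s := by
  simp only [IsEGZConst, forcesZeroSumSubseq_iff]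

lemma hasZeroSumStar_two_iff {m d : ℕ} {c : Finset (Fin d) → G} :
    HasZeroSumStar G 2 m d c ↔
      ∃ v : Fin d, ∃ U : Finset (Fin d), v ∉ U ∧ #U = m ∧ ∑ u ∈ U, c {v, u} = 0 := by
  constructor
  · rintro ⟨v, F, hFm, hF, hF0⟩
    set U : Finset (Fin d) := {u | u ≠ v ∧ {v, u} ∈ F}
    have hinj : Set.InjOn (fun u => ({v, u} : Finset (Fin d))) U :=
      (pair_injOn v).mono fun u hu => (mem_filter.1 hu).2.1
    have hFU : F = U.image fun u => {v, u} := by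
      ext e
      refine ⟨fun he => ?_, fun he => ?_⟩
      · obtain ⟨u, huv, rfl⟩ := exists_eq_pair_of_card_eq_two_of_mem (hF e he).1 (hF e he).2
        exact mem_image_of_mem _ (mem_filter.2 ⟨mem_univ u, huv, he⟩)
      · obtain ⟨u, hu, rfl⟩ := mem_image.1 he
        exact (mem_filter.1 hu).2.2
    refine ⟨v, U, by simp [U], ?_, ?_⟩
    · rw [← card_image_of_injOn hinj, ← hFU, hFm]
    · rw [← sum_image hinj, ← hFU, hF0]
  · rintro ⟨v, U, hvU, hUm, hU0⟩
    have hinj : Set.InjOn (fun u => ({v, u} : Finset (Fin d))) U :=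
      (pair_injOn v).mono fun u hu => Set.mem_compl_singleton_iff.2 (ne_of_mem_of_not_mem hu hvU)
    refine ⟨v, U.image fun u => {v, u}, by rw [card_image_of_injOn hinj, hUm], ?_,
      by rw [sum_image hinj, hU0]⟩
    intro e he
    obtain ⟨u, hu, rfl⟩ := mem_image.1 he
    exact ⟨card_pair (ne_of_mem_of_not_mem hu hvU).symm, mem_insert_self v {u}⟩

lemma forcesZeroSumSubseq_of_forcesZeroSumStar {m d : ℕ} (hexp : AddMonoid.exponent G ∣ m)
    (h : ForcesZeroSumStar G m d) : ForcesZeroSumSubseq G m d := by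
  intro a
  obtain ⟨v, U, hvU, hUm, hU0⟩ := hasZeroSumStar_two_iff.1 (h fun e => ∑ i ∈ e, a i)
  refine ⟨U, hUm, ?_⟩
  have hmv : m • a v = 0 := AddMonoid.exponent_dvd_iff_forall_nsmul_eq_zero.1 hexp (a v)
  calc ∑ u ∈ U, a u = ∑ u ∈ U, (a v + a u) := by
        rw [sum_add_distrib, sum_const, hUm, hmv, zero_add]
    _ = ∑ u ∈ U, ∑ i ∈ {v, u}, a i :=
        sum_congr rfl fun u hu => (sum_pair (ne_of_mem_of_not_mem hu hvU).symm).symm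
    _ = 0 := hU0

lemma forcesZeroSumStar_succ_of_forcesZeroSumSubseq {m d : ℕ} (h : ForcesZeroSumSubseq G m d) :
    ForcesZeroSumStar G m (d + 1) := by
  intro c
  obtain ⟨I, hIm, hI0⟩ := h fun i => c {Fin.last d, i.castSucc}
  refine hasZeroSumStar_two_iff.2 ⟨Fin.last d, I.map Fin.castSuccEmb, ?_, by simpa, ?_⟩
  · simp [Fin.castSucc_ne_last]
  · simpa using hI0

lemma forcesZeroSumSubseq_of_forcesZeroSumStar_of_injOn {m d n : ℕ}
    (φ : Finset (Fin d) → Fin n) (hφ : ∀ v, Set.InjOn (fun u => φ {v, u}) {v}ᶜ)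
    (h : ForcesZeroSumStar G m d) : ForcesZeroSumSubseq G m n := by
  intro a
  obtain ⟨v, U, hvU, hUm, hU0⟩ := hasZeroSumStar_two_iff.1 (h (a ∘ φ))
  have hinj : Set.InjOn (fun u => φ {v, u}) U :=
    (hφ v).mono fun u hu => Set.mem_compl_singleton_iff.2 (ne_of_mem_of_not_mem hu hvU)
  exact ⟨U.image fun u => φ {v, u}, by rw [card_image_of_injOn hinj, hUm],
    by rw [sum_image hinj]; exact hU0⟩

end

theorem stmt_11_general (G : Type*) [AddCommGroup G] (m s R : ℕ)
    (hexp : AddMonoid.exponent G ∣ m)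
    (hs : IsEGZConst G m s) (hR : IsStarRamsey G 2 m R) :
    s ≤ R ∧ R ≤ s + 1 ∧ (Even s → R = s + 1) := by
  rw [isEGZConst_iff] at hs
  have hsR : s ≤ R := hs.2 ⟨hR.1.1, forcesZeroSumSubseq_of_forcesZeroSumStar hexp hR.1.2⟩
  have hRs : R ≤ s + 1 :=
    hR.2 ⟨s.succ_pos, forcesZeroSumStar_succ_of_forcesZeroSumSubseq hs.1.2⟩
  refine ⟨hsR, hRs, fun heven => ?_⟩
  by_contra hne
  obtain ⟨n, rfl⟩ : ∃ n, s = n + 1 := ⟨s - 1, by have := hs.1.1; omega⟩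
  obtain rfl : R = n + 1 := by omega
  have hn : Odd n := by simpa [Nat.even_add_one] using heven
  obtain ⟨φ, hφ⟩ := exists_properEdgeColoring hn
  have : n + 1 ≤ n :=
    hs.2 ⟨hn.pos, forcesZeroSumSubseq_of_forcesZeroSumStar_of_injOn φ hφ hR.1.2⟩
  omega

/-- `s_m(G) ≤ R(K_{1,m}, G) ≤ s_m(G) + 1`, with equality `R = s_m(G) + 1` if
`s_m(G)` is even. -/
theorem stmt_11 (G : Type*) [AddCommGroup G] [Fintype G] (m s R : ℕ)
    (hm : 0 < m) (hexp : AddMonoid.exponent G ∣ m)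
    (hs : IsEGZConst G m s) (hR : IsStarRamsey G 2 m R) :
    s ≤ R ∧ R ≤ s + 1 ∧ (Even s → R = s + 1) :=
  stmt_11_general G m s R hexp hs hR
end

section
/- Let G be a finite abelian group and let r > q ≥ 0 and m ≥ |G| be integers with exp(G) | m. Then for every p with 0 ≤ p ≤ q, R(S(r,q,m), G) ≤ p + R(S(r-p, q-p, m), G). -/
/-! Fix the set `A` of the first `p` vertices. A zero-sum delta-system of type
`S(r-p, q-p, m)` for the coloring `e' ↦ c (e' ∪ A)` of the remaining vertices becomes one of
type `S(r, q, m)` for `c` once `A` is adjoined to every edge and to the kernel: adjoining a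
fixed set disjoint from everything is injective and commutes with intersections. -/

open Finset

namespace Finset

variable {α β : Type*}

lemma disjoint_map_of_forall_notMem (f : β ↪ α) {A : Finset α} (hA : ∀ b, f b ∉ A)
    (s : Finset β) : Disjoint (s.map f) A := by
  simpa [disjoint_left] using fun b _ => hA b

lemma card_map_union_of_forall_notMem [DecidableEq α] (f : β ↪ α) {A : Finset α}
    (hA : ∀ b, f b ∉ A) (e : Finset β) : (e.map f ∪ A).card = e.card + A.card := by
  rw [card_union_of_disjoint (disjoint_map_of_forall_notMem f hA e), card_map]

lemma map_union_inter_map_union [DecidableEq α] [DecidableEq β] (f : β ↪ α) (A : Finset α)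
    (e e' : Finset β) :
    (e.map f ∪ A) ∩ (e'.map f ∪ A) = (e ∩ e').map f ∪ A := by
  rw [map_inter, ← inter_union_distrib_right]

lemma map_union_injective [DecidableEq α] (f : β ↪ α) {A : Finset α} (hA : ∀ b, f b ∉ A) :
    Function.Injective fun e : Finset β => e.map f ∪ A := by
  intro e e' h
  have := congrArg (· \ A) h
  simp only [union_sdiff_cancel_right (disjoint_map_of_forall_notMem f hA _)] at this
  exact map_injective f this

end Finset

theorem HasZeroSumDelta.of_map_union {G : Type*} [AddCommGroup G] {r q m d d' : ℕ}
    (f : Fin d ↪ Fin d') {A : Finset (Fin d')} (hA : ∀ b, f b ∉ A)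
    {c : Finset (Fin d') → G} (h : HasZeroSumDelta G r q m d fun e => c (e.map f ∪ A)) :
    HasZeroSumDelta G (r + A.card) (q + A.card) m d' c := by
  obtain ⟨Q, hQ, F, hF, hr, hinter, hsum⟩ := h
  have hinj := map_union_injective f hA
  refine ⟨Q.map f ∪ A, by rw [card_map_union_of_forall_notMem f hA, hQ],
    F.image fun e => e.map f ∪ A, by rw [card_image_of_injective F hinj, hF], ?_, ?_, ?_⟩
  · simp only [mem_image, forall_exists_index, and_imp, forall_apply_eq_imp_iff₂]
    intro e he
    rw [card_map_union_of_forall_notMem f hA, hr e he]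
  · simp only [mem_image, forall_exists_index, and_imp, forall_apply_eq_imp_iff₂]
    intro e he e' he' hne
    rw [map_union_inter_map_union,
      hinter e he e' he' (ne_of_apply_ne (fun e => e.map f ∪ A) hne)]
  · rwa [sum_image fun e _ e' _ h => hinj h]

theorem Fin.natAdd_notMem_map_castAdd {d : ℕ} (p : ℕ) (b : Fin d) :
    Fin.natAddEmb p b ∉ (univ : Finset (Fin p)).map (Fin.castAddEmb d) := by
  simp only [Fin.natAddEmb_apply, mem_map, mem_univ, Fin.coe_castAddEmb, Fin.ext_iff,
    Fin.val_castAdd, Fin.val_natAdd, true_and, not_exists]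
  omega

theorem HasZeroSumDelta.add_add_of_forall {G : Type*} [AddCommGroup G] {r q m d : ℕ}
    (h : ∀ c : Finset (Fin d) → G, HasZeroSumDelta G r q m d c) (p : ℕ)
    (c : Finset (Fin (p + d)) → G) : HasZeroSumDelta G (r + p) (q + p) m (p + d) c := by
  simpa using HasZeroSumDelta.of_map_union _ (Fin.natAdd_notMem_map_castAdd p) (h _)

theorem stmt_14_general (G : Type*) [AddCommGroup G] (r q p m R1 R2 : ℕ)
    (hq : q < r) (hp : p ≤ q)
    (hR1 : IsDeltaRamsey G r q m R1)
    (hR2 : IsDeltaRamsey G (r - p) (q - p) m R2) :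
    R1 ≤ p + R2 := by
  obtain ⟨⟨hR2pos, hR2⟩, -⟩ := hR2
  refine hR1.2 ⟨by omega, fun c => ?_⟩
  have hr : r - p + p = r := by omega
  have hq' : q - p + p = q := by omega
  simpa only [hr, hq'] using HasZeroSumDelta.add_add_of_forall hR2 p c

/-- `R(S(r,q,m), G) ≤ p + R(S(r-p, q-p, m), G)` for `0 ≤ p ≤ q`. -/
theorem stmt_14 (G : Type*) [AddCommGroup G] [Fintype G] (r q p m R1 R2 : ℕ)
    (hq : q < r) (hp : p ≤ q) (hm : Fintype.card G ≤ m)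
    (hexp : AddMonoid.exponent G ∣ m)
    (hR1 : IsDeltaRamsey G r q m R1)
    (hR2 : IsDeltaRamsey G (r - p) (q - p) m R2) :
    R1 ≤ p + R2 :=
  stmt_14_general G r q p m R1 R2 hq hp hR1 hR2
end

section
/- Let G be a finite abelian group and let r > q ≥ 0 and m ≥ |G| be integers with exp(G) | m. Then R(S(r,q,m), G) ≥ (r-q)·m + max(q, D(G)-1). -/
open Finset

/-! The bound `q + (r - q) m` is a vertex count: once `m ≥ 2`, the core `Q` lies in every edge
and the petals `e \ Q` are pairwise disjoint. For the other bound, spread a zero-sum free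
sequence of length `D - 1` as weights over `D - 1` vertices and color each edge by its weight
sum. As `exp(G) ∣ m`, the core contributes `m • w(Q) = 0`, so the petals of a zero-sum
delta-system carry weight zero; the weighted vertices among them would form a nonempty zero-sum
subsequence, so the petals avoid all `D - 1` weighted vertices. -/

section ZeroSumFree

variable {G : Type*} [AddCommGroup G]

def ZeroSumFree (S : Multiset G) : Prop :=
  ∀ T ≤ S, T ≠ 0 → T.sum ≠ 0

/-- Pigeonhole on the `|G| + 1` prefix sums: two of them agree, and the block between them
sums to zero. -/
theorem List.exists_sublist_ne_nil_sum_eq_zero [Fintype G] (l : List G)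
    (hl : Fintype.card G ≤ l.length) : ∃ l', l'.Sublist l ∧ l' ≠ [] ∧ l'.sum = 0 := by
  have block (i j : ℕ) (hij : i < j) (hj : j ≤ l.length)
      (heq : (l.take i).sum = (l.take j).sum) :
      ∃ l', l'.Sublist l ∧ l' ≠ [] ∧ l'.sum = 0 := by
    refine ⟨(l.take j).drop i, (List.drop_sublist _ _).trans (List.take_sublist _ _), ?_, ?_⟩
    · rw [← List.length_pos_iff]
      simp only [List.length_drop, List.length_take]
      omega
    · have hsplit := List.sum_take_add_sum_drop (l.take j) i
      rwa [List.take_take, min_eq_left hij.le, ← heq, add_eq_left] at hsplit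
  obtain ⟨i, j, hne, heq⟩ := Fintype.exists_ne_map_eq_of_card_lt
    (fun i : Fin (Fintype.card G + 1) => (l.take i).sum) (by simp)
  rcases Fin.lt_or_lt_of_ne hne with h | h
  · exact block i j h (by omega) heq
  · exact block j i h (by omega) heq.symm

theorem ZeroSumFree.card_lt [Fintype G] {S : Multiset G} (hS : ZeroSumFree S) :
    Multiset.card S < Fintype.card G := by
  induction S using Quotient.inductionOn with
  | h l =>
    by_contra! hl
    obtain ⟨l', hsub, hne, hsum⟩ := List.exists_sublist_ne_nil_sum_eq_zero l hl
    exact hS l' (Multiset.coe_le.mpr hsub.subperm) (by simpa using hne) (by simpa using hsum)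

theorem IsDavenport.exists_zeroSumFree {D : ℕ} (hD : IsDavenport G D) :
    ∃ S : Multiset G, Multiset.card S = D - 1 ∧ ZeroSumFree S := by
  by_contra! h
  have hnotfree (S : Multiset G) (hS : Multiset.card S = D - 1) :
      ∃ T, T ≤ S ∧ T ≠ 0 ∧ T.sum = 0 := by
    simpa [ZeroSumFree] using h S hS
  have hpos : 0 < D - 1 := by
    by_contra! hD1
    obtain ⟨T, hT, hT0, -⟩ := hnotfree 0 (by rw [Multiset.card_zero]; omega)
    exact hT0 (Multiset.le_zero.mp hT)
  have := hD.2 ⟨hpos, hnotfree⟩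
  omega

end ZeroSumFree

section DeltaSystem

variable {α : Type*} [DecidableEq α]

def IsDeltaSystem (F : Finset (Finset α)) (Q : Finset α) : Prop :=
  (F : Set (Finset α)).Pairwise fun e f => e ∩ f = Q

def petals (F : Finset (Finset α)) (Q : Finset α) : Finset α :=
  F.biUnion (· \ Q)

theorem disjoint_petals (F : Finset (Finset α)) (Q : Finset α) : Disjoint Q (petals F Q) := by
  simp only [petals, disjoint_biUnion_right]
  exact fun _ _ => disjoint_sdiff

namespace IsDeltaSystem

variable {F : Finset (Finset α)} {Q : Finset α}

theorem subset_of_mem (hΔ : IsDeltaSystem F Q) (hF : 1 < #F) {e : Finset α} (he : e ∈ F) :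
    Q ⊆ e := by
  obtain ⟨f, hf, hfe⟩ := exists_mem_ne hF e
  rw [← hΔ he hf hfe.symm]
  exact inter_subset_left

theorem pairwiseDisjoint_sdiff (hΔ : IsDeltaSystem F Q) :
    (F : Set (Finset α)).PairwiseDisjoint (· \ Q) := by
  intro e he f hf hef
  rw [Function.onFun, disjoint_iff, ← inf_sdiff]
  exact (congrArg (· \ Q) (hΔ he hf hef)).trans sdiff_self

theorem card_petals (hΔ : IsDeltaSystem F Q) (hF : 1 < #F) {r : ℕ} (hr : ∀ e ∈ F, #e = r) :
    #(petals F Q) = (r - #Q) * #F := by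
  rw [petals, card_biUnion hΔ.pairwiseDisjoint_sdiff, sum_congr rfl fun e he => by
    rw [card_sdiff_of_subset (hΔ.subset_of_mem hF he), hr e he], sum_const, smul_eq_mul,
    mul_comm]

theorem card_add_mul_le [Fintype α] (hΔ : IsDeltaSystem F Q) (hF : F.Nonempty) {r : ℕ}
    (hr : ∀ e ∈ F, #e = r) : #Q + (r - #Q) * #F ≤ Fintype.card α := by
  rcases Nat.lt_or_ge 1 #F with h1 | h1
  · rw [← hΔ.card_petals h1 hr, ← card_union_of_disjoint (disjoint_petals F Q)]
    exact card_le_univ _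
  · obtain ⟨e, he⟩ := hF
    have := hr e he ▸ card_le_univ e
    have := card_le_univ Q
    have := card_pos.2 ⟨e, he⟩
    rw [show #F = 1 by omega]
    omega

theorem sum_sum_eq_sum_petals_add_nsmul {G : Type*} [AddCommMonoid G] (hΔ : IsDeltaSystem F Q) (hF : 1 < #F)
    (w : α → G) :
    ∑ e ∈ F, ∑ v ∈ e, w v = ∑ v ∈ petals F Q, w v + #F • ∑ v ∈ Q, w v := by
  rw [petals, sum_biUnion hΔ.pairwiseDisjoint_sdiff, ← sum_const, ← sum_add_distrib]
  exact sum_congr rfl fun e he => (sum_sdiff (hΔ.subset_of_mem hF he)).symm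

end IsDeltaSystem

end DeltaSystem

section Weights

variable {α G : Type*} [DecidableEq α] [AddCommGroup G]

theorem exists_weight_of_card_le [Fintype α] (S : Multiset G)
    (hS : Multiset.card S ≤ Fintype.card α) :
    ∃ (w : α → G) (W : Finset α), W.val.map w = S ∧ ∀ v ∉ W, w v = 0 := by
  induction S using Multiset.induction_on with
  | empty => exact ⟨0, ∅, rfl, fun _ _ => rfl⟩
  | cons a S ih =>
    rw [Multiset.card_cons] at hS
    obtain ⟨w, W, hW, hw⟩ := ih (by omega)
    have hWcard : #W < #(univ : Finset α) := by
      rw [card_univ, ← card_val, ← Multiset.card_map w, hW]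
      omega
    obtain ⟨v, -, hv⟩ := exists_mem_notMem_of_card_lt_card hWcard
    refine ⟨Function.update w v a, cons v W hv, ?_, fun u hu => ?_⟩
    · rw [cons_val, Multiset.map_cons, Function.update_self, ← hW]
      exact congrArg _ (Multiset.map_congr rfl fun u hu =>
        Function.update_of_ne (ne_of_mem_of_not_mem hu hv) _ _)
    · rw [mem_cons, not_or] at hu
      rw [Function.update_of_ne hu.1, hw u hu.2]

theorem ZeroSumFree.disjoint_of_sum_eq_zero {w : α → G} {W P : Finset α}
    (hS : ZeroSumFree (W.val.map w)) (hw : ∀ v ∉ W, w v = 0) (hP : ∑ v ∈ P, w v = 0) :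
    Disjoint W P := by
  rw [disjoint_iff_inter_eq_empty, ← val_eq_zero]
  by_contra hWP
  refine hS ((W ∩ P).val.map w) (Multiset.map_le_map (val_le_iff.2 inter_subset_left))
    (by simpa using hWP) ?_
  change ∑ v ∈ W ∩ P, w v = 0
  rw [← hP]
  exact sum_subset inter_subset_right fun v hvP hv => hw v fun hvW => hv (mem_inter.2 ⟨hvW, hvP⟩)

end Weights

/-- `R(S(r,q,m), G) ≥ (r-q)·m + max(q, D(G)-1)`. -/
theorem stmt_15 (G : Type*) [AddCommGroup G] [Fintype G] (r q m D R : ℕ)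
    (hq : q < r) (hm : Fintype.card G ≤ m) (hexp : AddMonoid.exponent G ∣ m)
    (hD : IsDavenport G D) (hR : IsDeltaRamsey G r q m R) :
    (r - q) * m + max q (D - 1) ≤ R := by
  obtain ⟨⟨-, hRall⟩, -⟩ := hR
  have hm0 : 0 < m := Fintype.card_pos.trans_le hm
  have hcore : q + (r - q) * m ≤ R := by
    obtain ⟨Q, rfl, F, rfl, hr, hΔ : IsDeltaSystem F Q, -⟩ := hRall 0
    simpa using hΔ.card_add_mul_le (card_pos.1 hm0) hr
  obtain ⟨S, hSD, hS⟩ := hD.exists_zeroSumFree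
  have hweight : D - 1 + (r - q) * m ≤ R := by
    by_contra! hlt
    have hSG := hS.card_lt
    have hm2 : 1 < m := by omega
    have hm_le : m ≤ (r - q) * m := Nat.le_mul_of_pos_left m (by omega)
    obtain ⟨w, W, rfl, hw⟩ := exists_weight_of_card_le (α := Fin R) S (by rw [Fintype.card_fin]; omega)
    obtain ⟨Q, rfl, F, rfl, hr, hΔ : IsDeltaSystem F Q, hsum⟩ := hRall fun e => ∑ v ∈ e, w v
    have hpetals : ∑ v ∈ petals F Q, w v = 0 := by
      rwa [hΔ.sum_sum_eq_sum_petals_add_nsmul hm2, AddMonoid.exponent_dvd_iff_forall_nsmul_eq_zero.1 hexp,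
        add_zero] at hsum
    have hunion := card_union_of_disjoint (hS.disjoint_of_sum_eq_zero hw hpetals)
    have := card_le_univ (W ∪ petals F Q)
    rw [hΔ.card_petals hm2 hr] at hunion
    simp only [Multiset.card_map, card_val] at hSD
    simp only [Fintype.card_fin] at this
    omega
  omega
end

section
/- Let G be a finite abelian group, let (g_1, ..., g_{D(G)-1}) be a zero-sum free sequence in G, and let n = (r-q)·m + D(G) - 2 where r > q ≥ 0, m ≥ |G|, exp(G) | m. Define a vertex weighting f on an n-element vertex set V which takes the values g_1, ..., g_{D(G)-1} on D(G)-1 distinguished vertices and 0 elsewhere, and color each r-subset e by c(e) = Σ_{v ∈ e} f(v). Then no delta-system of type S(r,q,m) in the complete r-uniform hypergraph on V has zero color sum. -/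
/-!
When `m ≥ 2` the members of a delta-system with kernel `Q` all contain `Q`, so their color
sum is `m • (∑ Q f) + ∑ U f`, where `U` is the disjoint union of the `m` petals `e \ Q`.
The first term vanishes because `exp(G) ∣ m`. The set `U` has `m (r - q) = n - (D - 2)` elements,
so one of the `D - 1` distinguished vertices lies in `U`; hence `∑ U f` is a nonempty subsum
of the zero-sum free sequence `g`, and is nonzero. When `m = 1` the group is trivial,
so `D = 1` and there are fewer than `r` vertices.
-/

open Finset

namespace Finset

variable {α : Type*} [DecidableEq α] {F : Finset (Finset α)} {Q : Finset α}

theorem subset_of_pairwise_inter_eq (hF : (F : Set (Finset α)).Pairwise (· ∩ · = Q))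
    (h : 1 < #F) {e : Finset α} (he : e ∈ F) : Q ⊆ e := by
  obtain ⟨e', he', hne⟩ := exists_mem_ne h e
  rw [← hF he' he hne]
  exact inter_subset_right

theorem pairwiseDisjoint_sdiff_of_pairwise_inter_eq
    (hF : (F : Set (Finset α)).Pairwise (· ∩ · = Q)) :
    (F : Set (Finset α)).PairwiseDisjoint (· \ Q) := by
  intro e he e' he' hne
  simp only [Function.onFun, disjoint_left, mem_sdiff]
  rintro a ⟨hae, haQ⟩ ⟨hae', -⟩
  exact haQ (hF he he' hne ▸ mem_inter.2 ⟨hae, hae'⟩)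

theorem card_biUnion_sdiff_of_pairwise_inter_eq
    (hF : (F : Set (Finset α)).Pairwise (· ∩ · = Q)) (hQ : ∀ e ∈ F, Q ⊆ e) {r : ℕ}
    (hr : ∀ e ∈ F, #e = r) : #(F.biUnion (· \ Q)) = #F * (r - #Q) := by
  rw [card_biUnion (pairwiseDisjoint_sdiff_of_pairwise_inter_eq hF),
    sum_congr rfl fun e he => by rw [card_sdiff_of_subset (hQ e he), hr e he], sum_const,
    smul_eq_mul]

theorem sum_sum_eq_card_nsmul_add_sum_biUnion_sdiff {M : Type*} [AddCommMonoid M]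
    (hF : (F : Set (Finset α)).Pairwise (· ∩ · = Q)) (hQ : ∀ e ∈ F, Q ⊆ e) (w : α → M) :
    ∑ e ∈ F, ∑ v ∈ e, w v = #F • ∑ v ∈ Q, w v + ∑ v ∈ F.biUnion (· \ Q), w v := by
  rw [sum_biUnion (pairwiseDisjoint_sdiff_of_pairwise_inter_eq hF), ← sum_const,
    ← sum_add_distrib]
  exact sum_congr rfl fun e he => by rw [add_comm, sum_sdiff (hQ e he)]

end Finset

theorem Finset.sum_ne_zero_of_exists_apply_mem {α β M : Type*} [AddCommMonoid M] {g : β → M}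
    (hg : ∀ T : Finset β, T.Nonempty → ∑ i ∈ T, g i ≠ 0) {ι : β → α}
    (hι : Function.Injective ι) {w : α → M} (hwg : ∀ i, w (ι i) = g i)
    (hw0 : ∀ v, v ∉ Set.range ι → w v = 0) {U : Finset α} (hU : ∃ i, ι i ∈ U) :
    ∑ v ∈ U, w v ≠ 0 := by
  rw [← sum_preimage ι U hι.injOn w fun v _ hv => hw0 v hv]
  simp only [hwg]
  obtain ⟨i, hi⟩ := hU
  exact hg _ ⟨i, mem_preimage.2 hi⟩

theorem Function.Injective.exists_apply_mem_of_card_lt {α β : Type*} [Fintype α] [Fintype β]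
    [DecidableEq α] {ι : β → α} (hι : Function.Injective ι) {U : Finset α}
    (h : Fintype.card α < #U + Fintype.card β) : ∃ i, ι i ∈ U := by
  by_contra! hU
  have hdisj : Disjoint U (univ.image ι) := by
    simp only [disjoint_left, mem_image, mem_univ, true_and, not_exists]
    exact fun v hv i hi => hU i (hi ▸ hv)
  have := card_le_univ (U ∪ univ.image ι)
  rw [card_union_of_disjoint hdisj, card_image_of_injective _ hι, card_univ] at this
  omega

theorem IsDavenport.le_one_of_subsingleton {G : Type*} [AddCommGroup G] [Subsingleton G]
    {D : ℕ} (hD : IsDavenport G D) : D ≤ 1 :=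
  hD.2 ⟨one_pos, fun S hS => ⟨S, le_rfl, by rintro rfl; simp at hS, Subsingleton.elim _ _⟩⟩

/-- The explicit vertex-weight coloring on `(r-q)·m + D - 2` vertices admits no
zero-sum delta-system of type `S(r,q,m)`. -/
theorem stmt_16 (G : Type*) [AddCommGroup G] [Fintype G] (r q m D n : ℕ)
    (hq : q < r) (hm : Fintype.card G ≤ m) (hexp : AddMonoid.exponent G ∣ m)
    (hD : IsDavenport G D) (hn : n = (r - q) * m + D - 2)
    (g : Fin (D - 1) → G)
    (hg : ∀ T : Finset (Fin (D - 1)), T.Nonempty → ∑ i ∈ T, g i ≠ 0)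
    (ι : Fin (D - 1) → Fin n) (hι : Function.Injective ι)
    (f : Fin n → G) (hfg : ∀ i, f (ι i) = g i)
    (hf0 : ∀ v, v ∉ Set.range ι → f v = 0) :
    ¬ HasZeroSumDelta G r q m n (fun e => ∑ v ∈ e, f v) := by
  rintro ⟨Q, rfl, F, rfl, hr, hpair, hsum⟩
  have hD1 : 1 ≤ D := hD.1.1
  obtain hm1 | hm2 : #F = 1 ∨ 1 < #F := by have := Fintype.card_pos (α := G); omega
  · have : Subsingleton G := Fintype.card_le_one_iff_subsingleton.1 (hm1 ▸ hm)
    have hD_le := hD.le_one_of_subsingleton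
    rw [hm1, mul_one] at hn
    obtain ⟨e, he⟩ := card_pos.1 (hm1 ▸ one_pos : 0 < #F)
    have := hr e he ▸ card_le_univ e
    simp only [Fintype.card_fin] at this
    omega
  · have hF : (F : Set (Finset (Fin n))).Pairwise (· ∩ · = Q) := hpair
    have hQ e (he : e ∈ F) : Q ⊆ e := subset_of_pairwise_inter_eq hF hm2 he
    have hU := card_biUnion_sdiff_of_pairwise_inter_eq hF hQ hr
    have hpetals : 0 < #F * (r - #Q) := Nat.mul_pos (by omega) (by omega)
    obtain ⟨i, hi⟩ := hι.exists_apply_mem_of_card_lt (U := F.biUnion (· \ Q)) (by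
      simp only [Fintype.card_fin, hU]
      rw [Nat.mul_comm] at hn
      omega)
    rw [sum_sum_eq_card_nsmul_add_sum_biUnion_sdiff hF hQ,
      AddMonoid.exponent_dvd_iff_forall_nsmul_eq_zero.1 hexp, zero_add] at hsum
    exact sum_ne_zero_of_exists_apply_mem hg hι hfg hf0 ⟨i, hi⟩ hsum
end
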